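/- arXiv:2211.16341 — 8 statements merged into one kernel-verified Lean document; each statement's English description precedes it below -/
import Mathlib

section
/- Exact penalty, direction 1 (Theorem 2.1(1), Ralph–Wright): Assume ℓ_L < u_L and ℓ_R < u_R componentwise, and let (x*, y*) with y* = (y*_A, y*_L, y*_R) be a strongly stationary point of the LCQP. Define ρ̄ = 1 + max{0, max_{i ∈ 𝓛̄ˡ(x*)} (−y*_{L_i})/(R_i x* − ℓ_{R_i}), max_{i ∈ 𝓡̄ˡ(x*)} (−y*_{R_i})/(L_i x* − ℓ_{L_i})} (with the maxima over empty sets taken to be 0). Then for every ρ ≥ ρ̄, the point x* together with the multipliers ȳ_A = y*_A; ȳ_{L_i} = y*_{L_i} for i ∉ 𝓛ˡ(x*) and ȳ_{L_i} = y*_{L_i} + ρ(R_i x* − ℓ_{R_i}) for i ∈ 𝓛ˡ(x*); ȳ_{R_i} = y*_{R_i} for i ∉ 𝓡ˡ(x*) and ȳ_{R_i} = y*_{R_i} + ρ(L_i x* − ℓ_{L_i}) for i ∈ 𝓡ˡ(x*), is a KKT point of the penalized problem min_{x ∈ Ω̃} ψ_ρ(x). -/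
open Matrix
open scoped Classical

noncomputable section

structure LCQPData (n nA nc : ℕ) where
  Q : Matrix (Fin n) (Fin n) ℝ
  g : Fin n → ℝ
  A : Matrix (Fin nA) (Fin n) ℝ
  lA : Fin nA → ℝ
  uA : Fin nA → ℝ
  L : Matrix (Fin nc) (Fin n) ℝ
  R : Matrix (Fin nc) (Fin n) ℝ
  lL : Fin nc → ℝ
  uL : Fin nc → ℝ
  lR : Fin nc → ℝ
  uR : Fin nc → ℝ

variable {n nA nc m : ℕ}

/-- Lower-active set of the constraint `l ≤ M x ≤ u`. -/
def actL (M : Matrix (Fin m) (Fin n) ℝ) (l u : Fin m → ℝ) (x : Fin n → ℝ) : Set (Fin m) :=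
  {i | l i = M.mulVec x i ∧ M.mulVec x i < u i}

/-- Upper-active set of the constraint `l ≤ M x ≤ u`. -/
def actU (M : Matrix (Fin m) (Fin n) ℝ) (l u : Fin m → ℝ) (x : Fin n → ℝ) : Set (Fin m) :=
  {i | l i < M.mulVec x i ∧ M.mulVec x i = u i}

/-- Free (inactive) set of the constraint `l ≤ M x ≤ u`. -/
def actF (M : Matrix (Fin m) (Fin n) ℝ) (l u : Fin m → ℝ) (x : Fin n → ℝ) : Set (Fin m) :=
  {i | l i < M.mulVec x i ∧ M.mulVec x i < u i}

/-- The relaxed feasible set Ω̃. -/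
def LCQPData.relFeas (P : LCQPData n nA nc) : Set (Fin n → ℝ) :=
  {x | (∀ i, P.lA i ≤ P.A.mulVec x i ∧ P.A.mulVec x i ≤ P.uA i) ∧
       (∀ i, P.lL i ≤ P.L.mulVec x i ∧ P.L.mulVec x i ≤ P.uL i) ∧
       (∀ i, P.lR i ≤ P.R.mulVec x i ∧ P.R.mulVec x i ≤ P.uR i)}

/-- The penalty function φ. -/
def LCQPData.phi (P : LCQPData n nA nc) (x : Fin n → ℝ) : ℝ :=
  (P.L.mulVec x - P.lL) ⬝ᵥ (P.R.mulVec x - P.lR)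

/-- The LCQP feasible set Ω. -/
def LCQPData.feas (P : LCQPData n nA nc) : Set (Fin n → ℝ) :=
  {x ∈ P.relFeas | P.phi x = 0}

/-- ∇φ(x). -/
def LCQPData.gradPhi (P : LCQPData n nA nc) (x : Fin n → ℝ) : Fin n → ℝ :=
  P.Lᵀ.mulVec (P.R.mulVec x - P.lR) + P.Rᵀ.mulVec (P.L.mulVec x - P.lL)

/-- The quadratic objective f. -/
def LCQPData.obj (P : LCQPData n nA nc) (x : Fin n → ℝ) : ℝ :=
  (1/2) * (x ⬝ᵥ P.Q.mulVec x) + P.g ⬝ᵥ x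

/-- The penalized objective ψ_ρ. -/
def LCQPData.psi (P : LCQPData n nA nc) (ρ : ℝ) (x : Fin n → ℝ) : ℝ :=
  P.obj x + ρ * P.phi x

/-- ∇ψ_ρ(x). -/
def LCQPData.gradPsi (P : LCQPData n nA nc) (ρ : ℝ) (x : Fin n → ℝ) : Fin n → ℝ :=
  P.Q.mulVec x + P.g + ρ • P.gradPhi x

/-- The convexified inner-loop model ϑ_{x̄,ρ}. -/
def LCQPData.theta (P : LCQPData n nA nc) (ρ : ℝ) (xb x : Fin n → ℝ) : ℝ :=
  (1/2) * (x ⬝ᵥ P.Q.mulVec x) + (P.g + ρ • P.gradPhi xb) ⬝ᵥ x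

/-- Strong stationarity of the LCQP. -/
def LCQPData.StrongStat (P : LCQPData n nA nc) (x : Fin n → ℝ)
    (yA : Fin nA → ℝ) (yL yR : Fin nc → ℝ) : Prop :=
  x ∈ P.feas ∧
  P.Q.mulVec x + P.g = P.Aᵀ.mulVec yA + P.Lᵀ.mulVec yL + P.Rᵀ.mulVec yR ∧
  (∀ i ∈ actF P.A P.lA P.uA x, yA i = 0) ∧
  (∀ i ∈ actL P.A P.lA P.uA x, 0 ≤ yA i) ∧
  (∀ i ∈ actU P.A P.lA P.uA x, yA i ≤ 0) ∧
  (∀ i ∈ actF P.L P.lL P.uL x, yL i = 0) ∧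
  (∀ i ∈ actL P.L P.lL P.uL x ∩ actL P.R P.lR P.uR x, 0 ≤ yL i) ∧
  (∀ i ∈ actU P.L P.lL P.uL x, yL i ≤ 0) ∧
  (∀ i ∈ actF P.R P.lR P.uR x, yR i = 0) ∧
  (∀ i ∈ actL P.L P.lL P.uL x ∩ actL P.R P.lR P.uR x, 0 ≤ yR i) ∧
  (∀ i ∈ actU P.R P.lR P.uR x, yR i ≤ 0)

/-- KKT point of the penalized problem min_{x ∈ Ω̃} ψ_ρ(x). -/
def LCQPData.PenKKT (P : LCQPData n nA nc) (ρ : ℝ) (x : Fin n → ℝ)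
    (yA : Fin nA → ℝ) (yL yR : Fin nc → ℝ) : Prop :=
  x ∈ P.relFeas ∧
  P.Q.mulVec x + P.g + ρ • P.gradPhi x
    = P.Aᵀ.mulVec yA + P.Lᵀ.mulVec yL + P.Rᵀ.mulVec yR ∧
  (∀ i ∈ actF P.A P.lA P.uA x, yA i = 0) ∧
  (∀ i ∈ actL P.A P.lA P.uA x, 0 ≤ yA i) ∧
  (∀ i ∈ actU P.A P.lA P.uA x, yA i ≤ 0) ∧
  (∀ i ∈ actF P.L P.lL P.uL x, yL i = 0) ∧
  (∀ i ∈ actL P.L P.lL P.uL x, 0 ≤ yL i) ∧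
  (∀ i ∈ actU P.L P.lL P.uL x, yL i ≤ 0) ∧
  (∀ i ∈ actF P.R P.lR P.uR x, yR i = 0) ∧
  (∀ i ∈ actL P.R P.lR P.uR x, 0 ≤ yR i) ∧
  (∀ i ∈ actU P.R P.lR P.uR x, yR i ≤ 0)


/-! Since `ℓ_L < u_L` and `ℓ_R < u_R`, complementarity of the slacks `Lx* - ℓ_L ≥ 0` and
`Rx* - ℓ_R ≥ 0` forces `R_i x* = ℓ_{R_i}` for `i ∉ 𝓛ˡ(x*)`, and symmetrically. Hence
`ρ ∇φ(x*) = Lᵀ(ρ (Rx* - ℓ_R)) + Rᵀ(ρ (Lx* - ℓ_L))` is absorbed exactly by shifting `y*_L`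
and `y*_R` on `𝓛ˡ(x*)` and `𝓡ˡ(x*)`. The shift leaves free and upper-active multipliers
alone, keeps biactive ones (whose shift is zero) nonnegative, and on `𝓛̄ˡ(x*)` the positive
slack `R_i x* - ℓ_{R_i}` times `ρ ≥ ρ̄` outweighs a negative `y*_{L_i}`. -/

theorem mul_eq_zero_of_dotProduct_eq_zero {ι R : Type*} [Fintype ι] [Semiring R]
    [PartialOrder R] [IsOrderedRing R] {v w : ι → R} (hv : 0 ≤ v) (hw : 0 ≤ w)
    (h : v ⬝ᵥ w = 0) (i : ι) : v i * w i = 0 :=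
  (Finset.sum_eq_zero_iff_of_nonneg fun j _ => mul_nonneg (hv j) (hw j)).1 h i
    (Finset.mem_univ i)

theorem lt_of_one_add_sSup_insert_zero_le {s : Set ℝ} (hs : s.Finite) {ρ : ℝ}
    (hρ : 1 + sSup (insert 0 s) ≤ ρ) : ∀ a ∈ s, a < ρ := fun _ ha => by
  linarith [le_csSup (hs.insert 0).bddAbove (Set.mem_insert_of_mem 0 ha)]

theorem add_mul_nonneg_of_neg_div_le {y d ρ : ℝ} (hd : 0 < d) (h : -y / d ≤ ρ) :
    0 ≤ y + ρ * d := by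
  linarith [(div_le_iff₀ hd).1 h]

section ActiveSets

variable {M : Matrix (Fin m) (Fin n) ℝ} {l u : Fin m → ℝ} {x : Fin n → ℝ} {i : Fin m}

theorem notMem_actL_of_mem_actF (hi : i ∈ actF M l u x) : i ∉ actL M l u x :=
  fun h => hi.1.ne h.1

theorem notMem_actL_of_mem_actU (hi : i ∈ actU M l u x) : i ∉ actL M l u x :=
  fun h => h.2.ne hi.2

theorem sub_eq_zero_of_mem_actL (hi : i ∈ actL M l u x) : (M *ᵥ x) i - l i = 0 :=
  sub_eq_zero.2 hi.1.symm

theorem mem_actL_of_eq (hlu : l i < u i) (hu : (M *ᵥ x) i ≤ u i) (h : (M *ᵥ x) i = l i) :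
    i ∈ actL M l u x :=
  ⟨h.symm, lt_of_le_of_ne hu fun h' => hlu.ne (h.symm.trans h')⟩

theorem sub_pos_of_notMem_actL (hlu : l i < u i)
    (hbox : l i ≤ (M *ᵥ x) i ∧ (M *ᵥ x) i ≤ u i) (hi : i ∉ actL M l u x) : 0 < (M *ᵥ x) i - l i :=
  sub_pos.2 <| lt_of_le_of_ne hbox.1 fun h => hi (mem_actL_of_eq hlu hbox.2 h.symm)

end ActiveSets

section ComplementaryPair

variable {M N : Matrix (Fin m) (Fin n) ℝ} {lM uM lN uN : Fin m → ℝ} {x : Fin n → ℝ}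

theorem slack_eq_zero_of_notMem_actL {i : Fin m} (hlu : lM i < uM i)
    (hu : (M *ᵥ x) i ≤ uM i) (hcomp : ((M *ᵥ x) i - lM i) * ((N *ᵥ x) i - lN i) = 0)
    (hi : i ∉ actL M lM uM x) :
    (N *ᵥ x) i - lN i = 0 :=
  (mul_eq_zero.1 hcomp).resolve_left fun h => hi (mem_actL_of_eq hlu hu (sub_eq_zero.1 h))

theorem ite_actL_eq_add_smul (hlu : ∀ i, lM i < uM i) (hu : ∀ i, (M *ᵥ x) i ≤ uM i)
    (hcomp : ∀ i, ((M *ᵥ x) i - lM i) * ((N *ᵥ x) i - lN i) = 0) (y : Fin m → ℝ) (ρ : ℝ) :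
    (fun i => if i ∈ actL M lM uM x then y i + ρ * ((N *ᵥ x) i - lN i) else y i)
      = y + ρ • (N *ᵥ x - lN) := by
  funext i
  by_cases hi : i ∈ actL M lM uM x
  · simp [hi]
  · simp [hi, slack_eq_zero_of_notMem_actL (hlu i) (hu i) (hcomp i) hi]

theorem ite_actL_nonneg {y : Fin m → ℝ} {ρ : ℝ} {i : Fin m}
    (hNlu : lN i < uN i) (hN : lN i ≤ (N *ᵥ x) i ∧ (N *ᵥ x) i ≤ uN i)
    (hbiactive : i ∈ actL N lN uN x → 0 ≤ y i)
    (hthreshold : i ∉ actL N lN uN x → -y i / ((N *ᵥ x) i - lN i) ≤ ρ)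
    (hi : i ∈ actL M lM uM x) :
    0 ≤ if i ∈ actL M lM uM x then y i + ρ * ((N *ᵥ x) i - lN i) else y i := by
  rw [if_pos hi]
  by_cases hiN : i ∈ actL N lN uN x
  · rw [sub_eq_zero_of_mem_actL hiN, mul_zero, add_zero]
    exact hbiactive hiN
  · exact add_mul_nonneg_of_neg_div_le (sub_pos_of_notMem_actL hNlu hN hiN) (hthreshold hiN)

end ComplementaryPair

namespace LCQPData

variable {P : LCQPData n nA nc} {x : Fin n → ℝ}

theorem slack_mul_slack_eq_zero (hx : x ∈ P.feas) (i : Fin nc) :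
    ((P.L *ᵥ x) i - P.lL i) * ((P.R *ᵥ x) i - P.lR i) = 0 :=
  mul_eq_zero_of_dotProduct_eq_zero (fun j => sub_nonneg.2 (hx.1.2.1 j).1)
    (fun j => sub_nonneg.2 (hx.1.2.2 j).1) hx.2 i

theorem penalized_stationarity_of_stationarity {yA : Fin nA → ℝ} {yL yR : Fin nc → ℝ}
    (h : P.Q *ᵥ x + P.g = P.Aᵀ *ᵥ yA + P.Lᵀ *ᵥ yL + P.Rᵀ *ᵥ yR) (ρ : ℝ) :
    P.Q *ᵥ x + P.g + ρ • P.gradPhi x = P.Aᵀ *ᵥ yA + P.Lᵀ *ᵥ (yL + ρ • (P.R *ᵥ x - P.lR))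
      + P.Rᵀ *ᵥ (yR + ρ • (P.L *ᵥ x - P.lL)) := by
  simp only [h, gradPhi, mulVec_add, mulVec_smul]
  module

end LCQPData

theorem exact_penalty_direction1_general (n nA nc : ℕ) (P : LCQPData n nA nc)
    (hLbnd : ∀ i, P.lL i < P.uL i) (hRbnd : ∀ i, P.lR i < P.uR i)
    (xs : Fin n → ℝ) (yA : Fin nA → ℝ) (yL yR : Fin nc → ℝ)
    (hss : P.StrongStat xs yA yL yR) :
    ∀ ρ ≥ 1 + sSup (insert (0:ℝ)
        (((fun i => -(yL i) / (P.R.mulVec xs i - P.lR i)) ''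
            (actL P.L P.lL P.uL xs \ (actL P.L P.lL P.uL xs ∩ actL P.R P.lR P.uR xs))) ∪
         ((fun i => -(yR i) / (P.L.mulVec xs i - P.lL i)) ''
            (actL P.R P.lR P.uR xs \ (actL P.L P.lL P.uL xs ∩ actL P.R P.lR P.uR xs))))),
      P.PenKKT ρ xs yA
        (fun i => if i ∈ actL P.L P.lL P.uL xs
          then yL i + ρ * (P.R.mulVec xs i - P.lR i) else yL i)
        (fun i => if i ∈ actL P.R P.lR P.uR xs
          then yR i + ρ * (P.L.mulVec xs i - P.lL i) else yR i) := by
  intro ρ hρ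
  obtain ⟨hx, hgrad, hAF, hAL, hAU, hLF, hWL, hLU, hRF, hWR, hRU⟩ := hss
  have hρ_gt := lt_of_one_add_sSup_insert_zero_le (Set.toFinite _) hρ
  have hcomp := LCQPData.slack_mul_slack_eq_zero hx
  have hbox := hx.1
  refine ⟨hbox, ?_, hAF, hAL, hAU, fun i hi => ?_, fun i hi => ?_, fun i hi => ?_,
    fun i hi => ?_, fun i hi => ?_, fun i hi => ?_⟩
  · rw [ite_actL_eq_add_smul hLbnd (fun i => (hbox.2.1 i).2) hcomp,
      ite_actL_eq_add_smul hRbnd (fun i => (hbox.2.2 i).2) fun i => (mul_comm _ _).trans (hcomp i)]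
    exact LCQPData.penalized_stationarity_of_stationarity hgrad ρ
  · simpa [notMem_actL_of_mem_actF hi] using hLF i hi
  · exact ite_actL_nonneg (hRbnd i) (hbox.2.2 i) (fun hiR => hWL i ⟨hi, hiR⟩)
      (fun hiR => (hρ_gt _ (Or.inl ⟨i, ⟨hi, fun h => hiR h.2⟩, rfl⟩)).le) hi
  · simpa [notMem_actL_of_mem_actU hi] using hLU i hi
  · simpa [notMem_actL_of_mem_actF hi] using hRF i hi
  · exact ite_actL_nonneg (hLbnd i) (hbox.2.1 i) (fun hiL => hWR i ⟨hiL, hi⟩)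
      (fun hiL => (hρ_gt _ (Or.inr ⟨i, ⟨hi, fun h => hiL h.1⟩, rfl⟩)).le) hi
  · simpa [notMem_actL_of_mem_actU hi] using hRU i hi

/-- Theorem 2.1(1) (Ralph–Wright): strong stationarity gives a KKT point of the
penalized problem for every `ρ` at least the explicit threshold `ρ̄`. -/
theorem exact_penalty_direction1 (n nA nc : ℕ) (P : LCQPData n nA nc)
    (hQ : P.Q.PosDef)
    (hLbnd : ∀ i, P.lL i < P.uL i) (hRbnd : ∀ i, P.lR i < P.uR i)
    (xs : Fin n → ℝ) (yA : Fin nA → ℝ) (yL yR : Fin nc → ℝ)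
    (hss : P.StrongStat xs yA yL yR) :
    ∀ ρ ≥ 1 + sSup (insert (0:ℝ)
        (((fun i => -(yL i) / (P.R.mulVec xs i - P.lR i)) ''
            (actL P.L P.lL P.uL xs \ (actL P.L P.lL P.uL xs ∩ actL P.R P.lR P.uR xs))) ∪
         ((fun i => -(yR i) / (P.L.mulVec xs i - P.lL i)) ''
            (actL P.R P.lR P.uR xs \ (actL P.L P.lL P.uL xs ∩ actL P.R P.lR P.uR xs))))),
      P.PenKKT ρ xs yA
        (fun i => if i ∈ actL P.L P.lL P.uL xs
          then yL i + ρ * (P.R.mulVec xs i - P.lR i) else yL i)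
        (fun i => if i ∈ actL P.R P.lR P.uR xs
          then yR i + ρ * (P.L.mulVec xs i - P.lL i) else yR i) :=
  exact_penalty_direction1_general n nA nc P hLbnd hRbnd xs yA yL yR hss
end
end

section
/- Lemma 4.1 (fixed points of the inner loop are outer-loop KKT points): Let ρ > 0 and x̄ ∈ Ω̃, and assume Ω̃ is nonempty. Then x̄ is the (unique) global minimizer of the convexified inner-loop subproblem min_{x ∈ Ω̃} ϑ_{x̄,ρ}(x) if and only if there exist multipliers (ȳ_A, ȳ_L, ȳ_R) making x̄ a KKT point of the penalized (outer-loop) problem min_{x ∈ Ω̃} ψ_ρ(x). -/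
open Finset Filter Topology

open Matrix
open scoped Classical

noncomputable section

/-- Farkas lemma, `Fin` version. -/
lemma farkas_fin {n : ℕ} : ∀ (m : ℕ) (v : Fin m → (Fin n → ℝ)) (b : Fin n → ℝ),
    (∀ d : Fin n → ℝ, (∀ i, 0 ≤ v i ⬝ᵥ d) → 0 ≤ b ⬝ᵥ d) →
    ∃ lam : Fin m → ℝ, (∀ i, 0 ≤ lam i) ∧ b = ∑ i, lam i • v i := by
  intro m
  induction m with
  | zero =>
    intro v b hb
    have h := hb (-b) (fun i => i.elim0)
    have hnn : 0 ≤ b ⬝ᵥ b :=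
      Finset.sum_nonneg fun i _ => mul_self_nonneg _
    have hb0 : b = 0 := by
      have hneg : b ⬝ᵥ (-b) = -(b ⬝ᵥ b) := by simp
      rw [hneg] at h
      exact dotProduct_self_eq_zero.mp (le_antisymm (by linarith) hnn)
    exact ⟨0, fun i => le_refl 0, by simp [hb0]⟩
  | succ m ih =>
    intro v b hb
    set v0 := v 0 with hv0
    set vt : Fin m → (Fin n → ℝ) := fun i => v i.succ with hvt
    by_cases hcase : ∀ d : Fin n → ℝ, (∀ i, 0 ≤ vt i ⬝ᵥ d) → 0 ≤ b ⬝ᵥ d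
    · obtain ⟨mu, hmu, hbeq⟩ := ih vt b hcase
      refine ⟨Fin.cases 0 mu, ?_, ?_⟩
      · intro i; induction i using Fin.cases <;> simp [hmu _]
      · rw [Fin.sum_univ_succ]; simpa using hbeq
    · push_neg at hcase
      obtain ⟨d0, hd0t, hd0b⟩ := hcase
      have hα : v0 ⬝ᵥ d0 < 0 := by
        by_contra h
        push_neg at h
        exact absurd (hb d0 (fun i => by
          induction i using Fin.cases with
          | zero => exact h
          | succ j => exact hd0t j)) (not_le.mpr hd0b)
      set α := v0 ⬝ᵥ d0 with hαdef
      have hα0 : α ≠ 0 := ne_of_lt hα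
      set vt' : Fin m → (Fin n → ℝ) := fun i => vt i - ((vt i ⬝ᵥ d0) / α) • v0 with hvt'
      set b' : Fin n → ℝ := b - ((b ⬝ᵥ d0) / α) • v0 with hb'
      have key : ∀ d : Fin n → ℝ, (∀ i, 0 ≤ vt' i ⬝ᵥ d) → 0 ≤ b' ⬝ᵥ d := by
        intro d hd
        set d' : Fin n → ℝ := d - ((v0 ⬝ᵥ d) / α) • d0 with hd'
        have hv0d' : v0 ⬝ᵥ d' = 0 := by
          simp only [hd', dotProduct_sub, dotProduct_smul, smul_eq_mul, ← hαdef]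
          field_simp
          simp
        have hswap : ∀ w : Fin n → ℝ, w ⬝ᵥ d' = (w - ((w ⬝ᵥ d0)/α) • v0) ⬝ᵥ d := by
          intro w
          simp only [hd', dotProduct_sub, dotProduct_smul,
            sub_dotProduct, smul_dotProduct, smul_eq_mul]
          ring
        have hall : ∀ i : Fin (m+1), 0 ≤ v i ⬝ᵥ d' := by
          intro i
          induction i using Fin.cases with
          | zero => rw [← hv0]; rw [hv0d']
          | succ j =>
            have := hd j
            rw [hswap (vt j)] at *
            exact this
        have := hb d' hall
        rwa [hswap b] at this
      obtain ⟨mu, hmu, hbeq⟩ := ih vt' b' key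
      set lam0 : ℝ := (b ⬝ᵥ d0 - ∑ i, mu i * (vt i ⬝ᵥ d0)) / α with hlam0
      have hsum_nonneg : 0 ≤ ∑ i, mu i * (vt i ⬝ᵥ d0) :=
        Finset.sum_nonneg fun i _ => mul_nonneg (hmu i) (hd0t i)
      have hlam0_pos : 0 ≤ lam0 := by
        apply le_of_lt
        apply div_pos_of_neg_of_neg _ hα
        linarith
      refine ⟨Fin.cases lam0 mu, ?_, ?_⟩
      · intro i; induction i using Fin.cases with
        | zero => simpa using hlam0_pos
        | succ j => simpa using hmu j
      · rw [Fin.sum_univ_succ]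
        simp only [Fin.cases_zero, Fin.cases_succ]
        show b = lam0 • v0 + ∑ i, mu i • vt i
        have hb2 : b = b' + ((b ⬝ᵥ d0) / α) • v0 := by rw [hb']; abel
        have hsplit : ∑ i, mu i • vt' i
            = ∑ i, mu i • vt i - (∑ i, mu i * (vt i ⬝ᵥ d0) / α) • v0 := by
          have hterm : ∀ i ∈ Finset.univ, mu i • vt' i
              = mu i • vt i - (mu i * (vt i ⬝ᵥ d0) / α) • v0 := by
            intro i _
            rw [hvt']
            simp only [smul_sub, smul_smul]
            congr 2
            ring
          rw [Finset.sum_congr rfl hterm, Finset.sum_sub_distrib, ← Finset.sum_smul]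
        rw [hb2, hbeq, hsplit, hlam0, sub_div, Finset.sum_div, sub_smul]
        abel

/-- Farkas lemma, `Fintype` version. -/
lemma farkas {n : ℕ} {ι : Type*} [Fintype ι] (v : ι → (Fin n → ℝ)) (b : Fin n → ℝ)
    (h : ∀ d : Fin n → ℝ, (∀ i, 0 ≤ v i ⬝ᵥ d) → 0 ≤ b ⬝ᵥ d) :
    ∃ lam : ι → ℝ, (∀ i, 0 ≤ lam i) ∧ b = ∑ i, lam i • v i := by
  let e := Fintype.equivFin ι
  obtain ⟨lam, hlam, hbeq⟩ := farkas_fin (Fintype.card ι) (v ∘ e.symm) b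
    (fun d hd => h d (fun i => by simpa using hd (e i)))
  refine ⟨lam ∘ e, fun i => hlam _, ?_⟩
  rw [hbeq, ← e.symm.sum_comp (fun i => (lam ∘ e) i • v i)]
  simp



lemma transpose_mulVec_eq_sum {m n : ℕ} (M : Matrix (Fin m) (Fin n) ℝ) (y : Fin m → ℝ) :
    Mᵀ.mulVec y = ∑ i, y i • M i := by
  ext j
  simp [Matrix.mulVec, dotProduct, Matrix.transpose_apply, Finset.sum_apply, mul_comm]

lemma signed_part {m n : ℕ} (M : Matrix (Fin m) (Fin n) ℝ) (cl cu : Fin m → Prop)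
    [DecidablePred cl] [DecidablePred cu] (a b : Fin m → ℝ) :
    (∑ i, a i • (if cl i then M i else 0)) + (∑ i, b i • (if cu i then -(M i) else 0))
      = Mᵀ.mulVec (fun i => (if cl i then a i else 0) - (if cu i then b i else 0)) := by
  rw [transpose_mulVec_eq_sum, ← Finset.sum_add_distrib]
  apply Finset.sum_congr rfl
  intro i _
  split_ifs <;> simp [sub_smul, smul_neg, sub_eq_add_neg, add_smul, neg_smul]

lemma dot_symm {n : ℕ} (Q : Matrix (Fin n) (Fin n) ℝ) (hsym : Qᵀ = Q) (x u : Fin n → ℝ) :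
    x ⬝ᵥ Q.mulVec u = u ⬝ᵥ Q.mulVec x := by
  rw [Matrix.dotProduct_mulVec, ← Matrix.mulVec_transpose, hsym, dotProduct_comm]

lemma quad_expand {n : ℕ} (Q : Matrix (Fin n) (Fin n) ℝ) (hsym : Qᵀ = Q) (c x u : Fin n → ℝ) :
    (1/2) * ((x + u) ⬝ᵥ Q.mulVec (x + u)) + c ⬝ᵥ (x + u)
    = ((1/2) * (x ⬝ᵥ Q.mulVec x) + c ⬝ᵥ x)
      + ((Q.mulVec x + c) ⬝ᵥ u + (1/2) * (u ⬝ᵥ Q.mulVec u)) := by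
  have hs := dot_symm Q hsym x u
  simp only [Matrix.mulVec_add, dotProduct_add, add_dotProduct]
  rw [hs, dotProduct_comm u (Q.mulVec x)]
  ring

lemma trans_dot {m n : ℕ} (M : Matrix (Fin m) (Fin n) ℝ) (y : Fin m → ℝ) (u : Fin n → ℝ) :
    Mᵀ.mulVec y ⬝ᵥ u = y ⬝ᵥ M.mulVec u := by
  rw [Matrix.mulVec_transpose, ← Matrix.dotProduct_mulVec]

lemma eventually_lower (bnd a c : ℝ) (h : bnd ≤ a) (hc : bnd = a → 0 ≤ c) :
    ∀ᶠ t in 𝓝[>] (0:ℝ), bnd ≤ a + t * c := by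
  rcases eq_or_lt_of_le h with heq | hlt
  · filter_upwards [self_mem_nhdsWithin] with t ht
    have ht' : (0:ℝ) < t := ht
    nlinarith [hc heq]
  · have htend : Filter.Tendsto (fun t : ℝ => a + t * c) (𝓝[>] (0:ℝ)) (𝓝 a) := by
      have hcont : Continuous fun t : ℝ => a + t * c := by continuity
      have h1 := (hcont.tendsto 0).mono_left (nhdsWithin_le_nhds : 𝓝[>] (0:ℝ) ≤ 𝓝 0)
      simpa using h1
    exact (htend.eventually (eventually_gt_nhds hlt)).mono fun t ht => le_of_lt ht

lemma eventually_upper (bnd a c : ℝ) (h : a ≤ bnd) (hc : a = bnd → c ≤ 0) :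
    ∀ᶠ t in 𝓝[>] (0:ℝ), a + t * c ≤ bnd := by
  have := eventually_lower (-bnd) (-a) (-c) (by linarith)
    (fun he => by linarith [hc (by linarith : a = bnd)])
  filter_upwards [this] with t ht
  linarith






variable {n nA nc m : ℕ}

/-- Lemma 4.1: a point of `Ω̃` is the (unique) global minimizer of the convexified
inner-loop subproblem linearized at itself iff it is a KKT point of the penalized
outer-loop problem. -/
theorem inner_fixed_point_iff_outer_KKT (n nA nc : ℕ) (P : LCQPData n nA nc)
    (hQ : P.Q.PosDef)
    (ρ : ℝ) (hρ : 0 < ρ)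
    (hne : P.relFeas.Nonempty)
    (xb : Fin n → ℝ) (hxb : xb ∈ P.relFeas) :
    (∀ z ∈ P.relFeas, z ≠ xb → P.theta ρ xb xb < P.theta ρ xb z) ↔
      (∃ ybA ybL ybR, P.PenKKT ρ xb ybA ybL ybR) := by

  classical
  have hsym : P.Qᵀ = P.Q := by
    have := hQ.1
    simpa [Matrix.IsHermitian, Matrix.conjTranspose_eq_transpose_of_trivial] using this
  have hqpos : ∀ d : Fin n → ℝ, d ≠ 0 → 0 < d ⬝ᵥ P.Q.mulVec d := fun d hd => by
    simpa using hQ.dotProduct_mulVec_pos hd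
  set c : Fin n → ℝ := P.g + ρ • P.gradPhi xb with hc
  set b : Fin n → ℝ := P.Q.mulVec xb + c with hb
  have hbeq : P.Q.mulVec xb + P.g + ρ • P.gradPhi xb = b := by rw [hb, hc, add_assoc]
  have hthet : ∀ u : Fin n → ℝ,
      P.theta ρ xb (xb + u) = P.theta ρ xb xb + (b ⬝ᵥ u + (1/2) * (u ⬝ᵥ P.Q.mulVec u)) := by
    intro u
    have h := quad_expand P.Q hsym c xb u
    simp only [LCQPData.theta, ← hc, hb]
    exact h
  constructor
  · -- minimizer → KKT
    intro hmin
    set CAl : Fin nA → Prop := fun i => P.lA i = P.A.mulVec xb i with hCAl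
    set CAu : Fin nA → Prop := fun i => P.A.mulVec xb i = P.uA i with hCAu
    set CLl : Fin nc → Prop := fun i => P.lL i = P.L.mulVec xb i with hCLl
    set CLu : Fin nc → Prop := fun i => P.L.mulVec xb i = P.uL i with hCLu
    set CRl : Fin nc → Prop := fun i => P.lR i = P.R.mulVec xb i with hCRl
    set CRu : Fin nc → Prop := fun i => P.R.mulVec xb i = P.uR i with hCRu
    set w : (Fin nA ⊕ Fin nA) ⊕ ((Fin nc ⊕ Fin nc) ⊕ (Fin nc ⊕ Fin nc)) → (Fin n → ℝ) :=
      Sum.elim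
        (Sum.elim (fun i => if CAl i then P.A i else 0) (fun i => if CAu i then -(P.A i) else 0))
        (Sum.elim
          (Sum.elim (fun i => if CLl i then P.L i else 0) (fun i => if CLu i then -(P.L i) else 0))
          (Sum.elim (fun i => if CRl i then P.R i else 0) (fun i => if CRu i then -(P.R i) else 0)))
      with hw
    have hyp : ∀ d : Fin n → ℝ, (∀ k, 0 ≤ w k ⬝ᵥ d) → 0 ≤ b ⬝ᵥ d := by
      intro d hd
      by_contra hneg
      push_neg at hneg
      have hd0 : d ≠ 0 := by
        intro h
        rw [h, dotProduct_zero] at hneg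
        exact absurd hneg (lt_irrefl 0)
      have hq : 0 < d ⬝ᵥ P.Q.mulVec d := hqpos d hd0
      have hAl : ∀ i, P.lA i = P.A.mulVec xb i → 0 ≤ P.A.mulVec d i := by
        intro i hi
        have h := hd (Sum.inl (Sum.inl i))
        rw [hw] at h
        simp only [Sum.elim_inl, Sum.elim_inr] at h
        rw [if_pos hi] at h
        exact h
      have hAu : ∀ i, P.A.mulVec xb i = P.uA i → P.A.mulVec d i ≤ 0 := by
        intro i hi
        have h := hd (Sum.inl (Sum.inr i))
        rw [hw] at h
        simp only [Sum.elim_inl, Sum.elim_inr] at h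
        rw [if_pos hi] at h
        rw [neg_dotProduct] at h
        have h' : P.A i ⬝ᵥ d ≤ 0 := by linarith
        exact h'
      have hLl : ∀ i, P.lL i = P.L.mulVec xb i → 0 ≤ P.L.mulVec d i := by
        intro i hi
        have h := hd (Sum.inr (Sum.inl (Sum.inl i)))
        rw [hw] at h
        simp only [Sum.elim_inl, Sum.elim_inr] at h
        rw [if_pos hi] at h
        exact h
      have hLu : ∀ i, P.L.mulVec xb i = P.uL i → P.L.mulVec d i ≤ 0 := by
        intro i hi
        have h := hd (Sum.inr (Sum.inl (Sum.inr i)))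
        rw [hw] at h
        simp only [Sum.elim_inl, Sum.elim_inr] at h
        rw [if_pos hi] at h
        rw [neg_dotProduct] at h
        have h' : P.L i ⬝ᵥ d ≤ 0 := by linarith
        exact h'
      have hRl : ∀ i, P.lR i = P.R.mulVec xb i → 0 ≤ P.R.mulVec d i := by
        intro i hi
        have h := hd (Sum.inr (Sum.inr (Sum.inl i)))
        rw [hw] at h
        simp only [Sum.elim_inl, Sum.elim_inr] at h
        rw [if_pos hi] at h
        exact h
      have hRu : ∀ i, P.R.mulVec xb i = P.uR i → P.R.mulVec d i ≤ 0 := by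
        intro i hi
        have h := hd (Sum.inr (Sum.inr (Sum.inr i)))
        rw [hw] at h
        simp only [Sum.elim_inl, Sum.elim_inr] at h
        rw [if_pos hi] at h
        rw [neg_dotProduct] at h
        have h' : P.R i ⬝ᵥ d ≤ 0 := by linarith
        exact h'
      have hrwgen : ∀ {m : ℕ} (M : Matrix (Fin m) (Fin n) ℝ) (t : ℝ) (i : Fin m),
          M.mulVec (xb + t • d) i = M.mulVec xb i + t * M.mulVec d i := by
        intro m M t i
        rw [Matrix.mulVec_add, Matrix.mulVec_smul]
        simp
      have hEA : ∀ᶠ t in 𝓝[>] (0:ℝ), ∀ i,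
          P.lA i ≤ P.A.mulVec (xb + t • d) i ∧ P.A.mulVec (xb + t • d) i ≤ P.uA i := by
        rw [Filter.eventually_all]
        intro i
        filter_upwards [eventually_lower (P.lA i) (P.A.mulVec xb i) (P.A.mulVec d i)
            (hxb.1 i).1 (hAl i),
          eventually_upper (P.uA i) (P.A.mulVec xb i) (P.A.mulVec d i)
            (hxb.1 i).2 (hAu i)] with t h1 h2
        rw [hrwgen]
        exact ⟨h1, h2⟩
      have hEL : ∀ᶠ t in 𝓝[>] (0:ℝ), ∀ i,
          P.lL i ≤ P.L.mulVec (xb + t • d) i ∧ P.L.mulVec (xb + t • d) i ≤ P.uL i := by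
        rw [Filter.eventually_all]
        intro i
        filter_upwards [eventually_lower (P.lL i) (P.L.mulVec xb i) (P.L.mulVec d i)
            (hxb.2.1 i).1 (hLl i),
          eventually_upper (P.uL i) (P.L.mulVec xb i) (P.L.mulVec d i)
            (hxb.2.1 i).2 (hLu i)] with t h1 h2
        rw [hrwgen]
        exact ⟨h1, h2⟩
      have hER : ∀ᶠ t in 𝓝[>] (0:ℝ), ∀ i,
          P.lR i ≤ P.R.mulVec (xb + t • d) i ∧ P.R.mulVec (xb + t • d) i ≤ P.uR i := by
        rw [Filter.eventually_all]
        intro i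
        filter_upwards [eventually_lower (P.lR i) (P.R.mulVec xb i) (P.R.mulVec d i)
            (hxb.2.2 i).1 (hRl i),
          eventually_upper (P.uR i) (P.R.mulVec xb i) (P.R.mulVec d i)
            (hxb.2.2 i).2 (hRu i)] with t h1 h2
        rw [hrwgen]
        exact ⟨h1, h2⟩
      have hδ : 0 < -(b ⬝ᵥ d) / (d ⬝ᵥ P.Q.mulVec d) := div_pos (by linarith) hq
      have hEt : ∀ᶠ t in 𝓝[>] (0:ℝ), t ≤ -(b ⬝ᵥ d) / (d ⬝ᵥ P.Q.mulVec d) :=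
        ((eventually_lt_nhds hδ).filter_mono nhdsWithin_le_nhds).mono fun t ht => le_of_lt ht
      obtain ⟨t, ⟨⟨⟨hfA, hfL⟩, hfR⟩, htle⟩, htpos⟩ :=
        ((((hEA.and hEL).and hER).and hEt).and self_mem_nhdsWithin).exists
      have htpos' : (0:ℝ) < t := htpos
      have hzfeas : xb + t • d ∈ P.relFeas := ⟨hfA, hfL, hfR⟩
      have hzne : xb + t • d ≠ xb := by
        intro h
        apply hd0
        have h2 : t • d = 0 := by
          have h3 := congrArg (fun y => y - xb) h
          simpa using h3
        rcases smul_eq_zero.mp h2 with h4 | h4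
        · exact absurd h4 (ne_of_gt htpos')
        · exact h4
      have hlt := hmin _ hzfeas hzne
      rw [hthet (t • d)] at hlt
      have h1 : b ⬝ᵥ (t • d) = t * (b ⬝ᵥ d) := by
        rw [dotProduct_smul]; simp
      have h2 : (t • d) ⬝ᵥ P.Q.mulVec (t • d) = t^2 * (d ⬝ᵥ P.Q.mulVec d) := by
        rw [Matrix.mulVec_smul, dotProduct_smul, smul_dotProduct]
        simp [smul_eq_mul]; ring
      rw [h1, h2] at hlt
      have hqle : t * (d ⬝ᵥ P.Q.mulVec d) ≤ -(b ⬝ᵥ d) := (le_div_iff₀ hq).mp htle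
      have h3 : t * (t * (d ⬝ᵥ P.Q.mulVec d)) ≤ t * (-(b ⬝ᵥ d)) :=
        mul_le_mul_of_nonneg_left hqle (le_of_lt htpos')
      have h4 : t * (b ⬝ᵥ d) < 0 := mul_neg_of_pos_of_neg htpos' hneg
      nlinarith [hlt, h3, h4]
    obtain ⟨lam, hlam, hrep⟩ := farkas w b hyp
    refine ⟨fun i => (if CAl i then lam (Sum.inl (Sum.inl i)) else 0)
        - (if CAu i then lam (Sum.inl (Sum.inr i)) else 0),
      fun i => (if CLl i then lam (Sum.inr (Sum.inl (Sum.inl i))) else 0)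
        - (if CLu i then lam (Sum.inr (Sum.inl (Sum.inr i))) else 0),
      fun i => (if CRl i then lam (Sum.inr (Sum.inr (Sum.inl i))) else 0)
        - (if CRu i then lam (Sum.inr (Sum.inr (Sum.inr i))) else 0),
      hxb, ?_, ?_, ?_, ?_, ?_, ?_, ?_, ?_, ?_, ?_⟩
    · -- the gradient equation
      rw [hbeq, hrep, hw]
      simp only [Fintype.sum_sum_type, Sum.elim_inl, Sum.elim_inr]
      rw [signed_part P.A CAl CAu (fun i => lam (Sum.inl (Sum.inl i)))
          (fun i => lam (Sum.inl (Sum.inr i))),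
        signed_part P.L CLl CLu (fun i => lam (Sum.inr (Sum.inl (Sum.inl i))))
          (fun i => lam (Sum.inr (Sum.inl (Sum.inr i)))),
        signed_part P.R CRl CRu (fun i => lam (Sum.inr (Sum.inr (Sum.inl i))))
          (fun i => lam (Sum.inr (Sum.inr (Sum.inr i))))]
      rw [add_assoc]
    · intro i hi
      simp only [hCAl, hCAu, hCLl, hCLu, hCRl, hCRu]
      simp only [if_neg (ne_of_lt hi.1), if_neg (ne_of_lt hi.2), sub_zero]
    · intro i hi
      simp only [hCAl, hCAu, hCLl, hCLu, hCRl, hCRu]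
      simp only [if_pos hi.1, if_neg (ne_of_lt hi.2), sub_zero]
      exact hlam _
    · intro i hi
      simp only [hCAl, hCAu, hCLl, hCLu, hCRl, hCRu]
      simp only [if_neg (ne_of_lt hi.1), if_pos hi.2, zero_sub]
      exact neg_nonpos.mpr (hlam _)
    · intro i hi
      simp only [hCAl, hCAu, hCLl, hCLu, hCRl, hCRu]
      simp only [if_neg (ne_of_lt hi.1), if_neg (ne_of_lt hi.2), sub_zero]
    · intro i hi
      simp only [hCAl, hCAu, hCLl, hCLu, hCRl, hCRu]
      simp only [if_pos hi.1, if_neg (ne_of_lt hi.2), sub_zero]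
      exact hlam _
    · intro i hi
      simp only [hCAl, hCAu, hCLl, hCLu, hCRl, hCRu]
      simp only [if_neg (ne_of_lt hi.1), if_pos hi.2, zero_sub]
      exact neg_nonpos.mpr (hlam _)
    · intro i hi
      simp only [hCAl, hCAu, hCLl, hCLu, hCRl, hCRu]
      simp only [if_neg (ne_of_lt hi.1), if_neg (ne_of_lt hi.2), sub_zero]
    · intro i hi
      simp only [hCAl, hCAu, hCLl, hCLu, hCRl, hCRu]
      simp only [if_pos hi.1, if_neg (ne_of_lt hi.2), sub_zero]
      exact hlam _
    · intro i hi
      simp only [hCAl, hCAu, hCLl, hCLu, hCRl, hCRu]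
      simp only [if_neg (ne_of_lt hi.1), if_pos hi.2, zero_sub]
      exact neg_nonpos.mpr (hlam _)
  · -- KKT → minimizer
    rintro ⟨yA, yL, yR, hfeas, heq, hAf, hAl, hAu, hLf, hLl, hLu, hRf, hRl, hRu⟩ z hz hzne
    have hu0 : z - xb ≠ 0 := sub_ne_zero.mpr hzne
    have hth := hthet (z - xb)
    rw [show xb + (z - xb) = z from by abel] at hth
    rw [hth]
    have hquad : 0 < (1/2) * ((z - xb) ⬝ᵥ P.Q.mulVec (z - xb)) := by
      linarith [hqpos _ hu0]
    have hb2 : b = P.Aᵀ.mulVec yA + P.Lᵀ.mulVec yL + P.Rᵀ.mulVec yR := by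
      rw [← heq]; exact hbeq.symm
    have genterm : ∀ (m : ℕ) (M : Matrix (Fin m) (Fin n) ℝ) (l u' : Fin m → ℝ) (y : Fin m → ℝ),
        (∀ i, l i ≤ M.mulVec xb i ∧ M.mulVec xb i ≤ u' i) →
        (∀ i, l i ≤ M.mulVec z i ∧ M.mulVec z i ≤ u' i) →
        (∀ i, l i < M.mulVec xb i → M.mulVec xb i < u' i → y i = 0) →
        (∀ i, l i = M.mulVec xb i → M.mulVec xb i < u' i → 0 ≤ y i) →
        (∀ i, l i < M.mulVec xb i → M.mulVec xb i = u' i → y i ≤ 0) →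
        0 ≤ y ⬝ᵥ M.mulVec (z - xb) := by
      intro m M l u' y hxbf hzf hf hlo hup
      rw [Matrix.mulVec_sub]
      apply Finset.sum_nonneg
      intro i _
      rcases eq_or_lt_of_le (hxbf i).1 with he1 | hl1
      · rcases eq_or_lt_of_le (hxbf i).2 with he2 | hl2
        · have h5 : M.mulVec z i ≤ M.mulVec xb i := by rw [he2]; exact (hzf i).2
          have h6 : M.mulVec xb i ≤ M.mulVec z i := by rw [← he1]; exact (hzf i).1
          have h7 : (M.mulVec z - M.mulVec xb) i = 0 := by
            simp only [Pi.sub_apply]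
            linarith
          rw [h7]
          simp
        · apply mul_nonneg (hlo i he1 hl2)
          simp only [Pi.sub_apply, sub_nonneg]
          rw [← he1]
          exact (hzf i).1
      · rcases eq_or_lt_of_le (hxbf i).2 with he2 | hl2
        · have hy := hup i hl1 he2
          have hv : (M.mulVec z - M.mulVec xb) i ≤ 0 := by
            simp only [Pi.sub_apply]
            rw [sub_nonpos, he2]
            exact (hzf i).2
          nlinarith [mul_nonneg (neg_nonneg.mpr hy) (neg_nonneg.mpr hv)]
        · rw [hf i hl1 hl2]
          simp
    have hlin : 0 ≤ b ⬝ᵥ (z - xb) := by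
      rw [hb2, add_dotProduct, add_dotProduct, trans_dot, trans_dot, trans_dot]
      have tA := genterm nA P.A P.lA P.uA yA (fun i => hxb.1 i) (fun i => hz.1 i)
        (fun i hi1 hi2 => hAf i ⟨hi1, hi2⟩) (fun i hi1 hi2 => hAl i ⟨hi1, hi2⟩)
        (fun i hi1 hi2 => hAu i ⟨hi1, hi2⟩)
      have tL := genterm nc P.L P.lL P.uL yL (fun i => hxb.2.1 i) (fun i => hz.2.1 i)
        (fun i hi1 hi2 => hLf i ⟨hi1, hi2⟩) (fun i hi1 hi2 => hLl i ⟨hi1, hi2⟩)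
        (fun i hi1 hi2 => hLu i ⟨hi1, hi2⟩)
      have tR := genterm nc P.R P.lR P.uR yR (fun i => hxb.2.2 i) (fun i => hz.2.2 i)
        (fun i hi1 hi2 => hRf i ⟨hi1, hi2⟩) (fun i hi1 hi2 => hRl i ⟨hi1, hi2⟩)
        (fun i hi1 hi2 => hRu i ⟨hi1, hi2⟩)
      linarith
    linarith
end
end

section
/- Theorem 4.2, part 1 (merit function descent): Let ρ > 0, x̄ ∈ Ω̃, and let x* be the unique global minimizer of the convexified inner-loop subproblem min_{x ∈ Ω̃} ϑ_{x̄,ρ}(x). Then the merit function ψ_ρ is nonincreasing at x̄ in the direction p = x* − x̄, i.e. ∇ψ_ρ(x̄)ᵀ(x* − x̄) ≤ 0. -/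
open Matrix
open scoped Classical

noncomputable section

variable {n nA nc m : ℕ}

/-- Theorem 4.2, part 1: merit function descent along the inner-loop step. -/
theorem merit_descent (n nA nc : ℕ) (P : LCQPData n nA nc)
    (hQ : P.Q.PosDef)
    (ρ : ℝ) (hρ : 0 < ρ)
    (xb : Fin n → ℝ) (hxb : xb ∈ P.relFeas)
    (xstar : Fin n → ℝ)
    (hmin : xstar ∈ P.relFeas ∧
      ∀ z ∈ P.relFeas, z ≠ xstar → P.theta ρ xb xstar < P.theta ρ xb z) :
    P.gradPsi ρ xb ⬝ᵥ (xstar - xb) ≤ 0 := by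
  by_cases hEq : xb = xstar
  · subst hEq
    simp
  · have hsym : ∀ u v : Fin n → ℝ, u ⬝ᵥ P.Q.mulVec v = v ⬝ᵥ P.Q.mulVec u := by
      intro u v
      have hT : P.Qᵀ = P.Q := by have h := hQ.1; simp at h; exact h
      rw [Matrix.dotProduct_mulVec, ← Matrix.mulVec_transpose, hT,
        dotProduct_comm]
    have hpos : 0 ≤ (xstar - xb) ⬝ᵥ P.Q.mulVec (xstar - xb) := by
      have h := hQ.dotProduct_mulVec_pos (x := xstar - xb) (sub_ne_zero.mpr (fun h => hEq h.symm))
      simpa using h.le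
    have hlt : P.theta ρ xb xstar < P.theta ρ xb xb :=
      hmin.2 xb hxb (fun h => hEq h)
    have key : P.gradPsi ρ xb ⬝ᵥ (xstar - xb)
        = (P.theta ρ xb xstar - P.theta ρ xb xb)
          - (1/2) * ((xstar - xb) ⬝ᵥ P.Q.mulVec (xstar - xb)) := by
      have h1 := hsym xb xstar
      simp only [LCQPData.gradPsi, LCQPData.theta, Matrix.mulVec_sub,
        dotProduct_sub, sub_dotProduct, add_dotProduct,
        dotProduct_add]
      have h2 := dotProduct_comm (P.Q.mulVec xb) xstar
      have h3 := dotProduct_comm (P.Q.mulVec xb) xb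
      ring_nf
      linarith
    rw [key]
    linarith
end
end

section
/- Theorem 4.2, part 2 (strict merit function descent at non-stationary points): Let ρ > 0, x̄ ∈ Ω̃, and let x* be the unique global minimizer of the convexified inner-loop subproblem min_{x ∈ Ω̃} ϑ_{x̄,ρ}(x). If there are no multipliers making x̄ a KKT point of the penalized problem min_{x ∈ Ω̃} ψ_ρ(x), then ∇ψ_ρ(x̄)ᵀ(x* − x̄) < 0. -/
open Matrix
open scoped Classical

noncomputable section

open Filter
open scoped Topology

variable {n nA nc m : ℕ}

lemma myFarkas_fin : ∀ (k : ℕ) {n : ℕ} (v : Fin k → (Fin n → ℝ)) (c : Fin n → ℝ),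
    (∀ d, (∀ i, 0 ≤ v i ⬝ᵥ d) → 0 ≤ c ⬝ᵥ d) →
    ∃ lam : Fin k → ℝ, (∀ i, 0 ≤ lam i) ∧ c = ∑ i, lam i • v i := by
  intro k
  induction k with
  | zero =>
    intro n v c H
    have h0 : 0 ≤ c ⬝ᵥ (-c) := H _ (fun i => i.elim0)
    have h1 : c ⬝ᵥ c ≤ 0 := by
      have : c ⬝ᵥ (-c) = -(c ⬝ᵥ c) := by simp
      linarith [h0, this ▸ h0]
    have hsq : (0:ℝ) ≤ c ⬝ᵥ c := by
      simp only [dotProduct]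
      exact Finset.sum_nonneg fun i _ => mul_self_nonneg _
    have hc : c = 0 := dotProduct_self_eq_zero.mp (le_antisymm h1 hsq)
    exact ⟨fun i => i.elim0, fun i => i.elim0, by simp [hc]⟩
  | succ k IH =>
    intro n v c H
    by_cases hH : ∀ d, (∀ i : Fin k, 0 ≤ v i.succ ⬝ᵥ d) → 0 ≤ c ⬝ᵥ d
    · obtain ⟨lam, hlam, hc⟩ := IH (fun i => v i.succ) c hH
      refine ⟨Fin.cons 0 lam, fun i => ?_, ?_⟩
      · refine Fin.cases ?_ ?_ i
        · simp
        · intro j; simpa using hlam j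
      · rw [Fin.sum_univ_succ]; simpa using hc
    · push_neg at hH
      obtain ⟨d0, hd0, hcd0⟩ := hH
      have hβ : v 0 ⬝ᵥ d0 < 0 := by
        by_contra hb
        push_neg at hb
        have hall : ∀ i : Fin (k+1), 0 ≤ v i ⬝ᵥ d0 := fun i => Fin.cases hb hd0 i
        exact absurd (H d0 hall) (not_le.mpr hcd0)
      set β := v 0 ⬝ᵥ d0 with hβdef
      have hβne : β ≠ 0 := ne_of_lt hβ
      set vt : Fin k → (Fin n → ℝ) := fun i => v i.succ - ((v i.succ ⬝ᵥ d0)/β) • v 0 with hvt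
      set ct : Fin n → ℝ := c - ((c ⬝ᵥ d0)/β) • v 0 with hct0
      have key : ∀ (w : Fin n → ℝ) d,
          (w - ((w ⬝ᵥ d0)/β) • v 0) ⬝ᵥ d = w ⬝ᵥ (d - ((v 0 ⬝ᵥ d)/β) • d0) := by
        intro w d
        simp only [sub_dotProduct, dotProduct_sub, smul_dotProduct, dotProduct_smul, smul_eq_mul]
        ring
      have Ht : ∀ d, (∀ i, 0 ≤ vt i ⬝ᵥ d) → 0 ≤ ct ⬝ᵥ d := by
        intro d hd
        rw [hct0, key]
        apply H
        intro i
        refine Fin.cases ?_ ?_ i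
        · have : v 0 ⬝ᵥ (d - ((v 0 ⬝ᵥ d)/β) • d0) = 0 := by
            simp only [dotProduct_sub, dotProduct_smul, smul_eq_mul]
            field_simp
            rw [← hβdef]; ring
          exact le_of_eq this.symm
        · intro j
          have := hd j
          rwa [hvt, key] at this
      obtain ⟨lam, hlam, hc⟩ := IH vt ct Ht
      set μ := (c ⬝ᵥ d0 - ∑ i, lam i * (v i.succ ⬝ᵥ d0))/β with hμdef
      have hsum0 : 0 ≤ ∑ i, lam i * (v i.succ ⬝ᵥ d0) :=
        Finset.sum_nonneg fun i _ => mul_nonneg (hlam i) (hd0 i)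
      have hμ : 0 ≤ μ := by
        apply div_nonneg_iff.mpr
        exact Or.inr ⟨by linarith, hβ.le⟩
      refine ⟨Fin.cons μ lam, fun i => Fin.cases hμ hlam i, ?_⟩
      rw [Fin.sum_univ_succ]
      simp only [Fin.cons_zero, Fin.cons_succ]
      have hc2 : c = ∑ i, lam i • vt i + ((c ⬝ᵥ d0)/β) • v 0 := by
        rw [← hc, hct0]; abel
      rw [hc2]
      simp only [hvt, smul_sub, smul_smul]
      rw [Finset.sum_sub_distrib, ← Finset.sum_smul]
      have hμeq : μ = (c ⬝ᵥ d0)/β - ∑ i, lam i * ((v i.succ ⬝ᵥ d0)/β) := by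
        rw [hμdef, sub_div, Finset.sum_div]
        congr 1
        exact Finset.sum_congr rfl fun i _ => (mul_div_assoc _ _ _)
      rw [hμeq, sub_smul]
      abel


lemma myFarkas {n : ℕ} {ι : Type} [Fintype ι] (v : ι → (Fin n → ℝ)) (c : Fin n → ℝ)
    (H : ∀ d, (∀ i, 0 ≤ v i ⬝ᵥ d) → 0 ≤ c ⬝ᵥ d)
    (hfin : ∀ (k : ℕ) (w : Fin k → (Fin n → ℝ)),
      (∀ d, (∀ i, 0 ≤ w i ⬝ᵥ d) → 0 ≤ c ⬝ᵥ d) →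
      ∃ lam : Fin k → ℝ, (∀ i, 0 ≤ lam i) ∧ c = ∑ i, lam i • w i) :
    ∃ lam : ι → ℝ, (∀ i, 0 ≤ lam i) ∧ c = ∑ i, lam i • v i := by
  obtain ⟨e⟩ := Fintype.truncEquivFin ι
  obtain ⟨lam, hlam, hc⟩ := hfin (Fintype.card ι) (v ∘ e.symm)
    (fun d hd => H d (fun i => by simpa using hd (e i)))
  refine ⟨fun i => lam (e i), fun i => hlam _, ?_⟩
  rw [hc]
  rw [← Equiv.sum_comp e (fun i => lam i • (v ∘ e.symm) i)]
  simp

lemma mytranspose_mulVec_eq_sum {m n : ℕ} (M : Matrix (Fin m) (Fin n) ℝ) (y : Fin m → ℝ) :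
    Mᵀ.mulVec y = ∑ i, y i • (fun j => M i j) := by
  funext j
  simp [Matrix.mulVec, Matrix.transpose, dotProduct, Finset.sum_apply, mul_comm]

lemma myscalar_event (l xv dv u : ℝ) (h1 : l ≤ xv) (h2 : xv ≤ u)
    (hl : l = xv → 0 ≤ dv) (hu : xv = u → dv ≤ 0) :
    ∀ᶠ t in 𝓝[>] (0:ℝ), l ≤ xv + t * dv ∧ xv + t * dv ≤ u := by
  have tend : Tendsto (fun t : ℝ => xv + t * dv) (𝓝[>] 0) (𝓝 xv) := by
    have h : Tendsto (fun t : ℝ => xv + t * dv) (𝓝 0) (𝓝 (xv + 0 * dv)) :=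
      (tendsto_const_nhds.add (tendsto_id.mul tendsto_const_nhds))
    simpa using h.mono_left nhdsWithin_le_nhds
  have e1 : ∀ᶠ t in 𝓝[>] (0:ℝ), l ≤ xv + t * dv := by
    rcases eq_or_lt_of_le h1 with heq | hlt
    · have hdv := hl heq
      filter_upwards [self_mem_nhdsWithin] with t ht
      have : (0:ℝ) < t := ht
      nlinarith
    · exact (tend.eventually (eventually_gt_nhds hlt)).mono fun t ht => ht.le
  have e2 : ∀ᶠ t in 𝓝[>] (0:ℝ), xv + t * dv ≤ u := by
    rcases eq_or_lt_of_le h2 with heq | hlt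
    · have hdv := hu heq
      filter_upwards [self_mem_nhdsWithin] with t ht
      have : (0:ℝ) < t := ht
      nlinarith
    · exact (tend.eventually (eventually_lt_nhds hlt)).mono fun t ht => ht.le
  exact e1.and e2

lemma mymat_event {m n : ℕ} (M : Matrix (Fin m) (Fin n) ℝ) (l u : Fin m → ℝ) (x d : Fin n → ℝ)
    (hx : ∀ i, l i ≤ M.mulVec x i ∧ M.mulVec x i ≤ u i)
    (hl : ∀ i, l i = M.mulVec x i → 0 ≤ M.mulVec d i)
    (hu : ∀ i, M.mulVec x i = u i → M.mulVec d i ≤ 0) :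
    ∀ᶠ t in 𝓝[>] (0:ℝ), ∀ i, l i ≤ M.mulVec (x + t • d) i ∧ M.mulVec (x + t • d) i ≤ u i := by
  rw [eventually_all]
  intro i
  have h := myscalar_event (l i) (M.mulVec x i) (M.mulVec d i) (u i) (hx i).1 (hx i).2 (hl i) (hu i)
  refine h.mono fun t ht => ?_
  have hrw : M.mulVec (x + t • d) i = M.mulVec x i + t * M.mulVec d i := by
    simp [Matrix.mulVec_add, Matrix.mulVec_smul]
  rw [hrw]
  exact ht

lemma mytheta_expand {n nA nc : ℕ} (P : LCQPData n nA nc) (hQs : P.Qᵀ = P.Q)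
    (ρ : ℝ) (xb d : Fin n → ℝ) (t : ℝ) :
    P.theta ρ xb (xb + t • d)
      = P.theta ρ xb xb + t * (P.gradPsi ρ xb ⬝ᵥ d) + t^2/2 * (d ⬝ᵥ P.Q.mulVec d) := by
  have hsym : d ⬝ᵥ P.Q.mulVec xb = xb ⬝ᵥ P.Q.mulVec d := by
    rw [Matrix.dotProduct_mulVec, ← Matrix.mulVec_transpose, hQs]
    exact dotProduct_comm _ _
  have h1 : (xb + t • d) ⬝ᵥ P.Q.mulVec (xb + t • d)
      = xb ⬝ᵥ P.Q.mulVec xb + 2*t*(xb ⬝ᵥ P.Q.mulVec d) + t^2*(d ⬝ᵥ P.Q.mulVec d) := by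
    simp only [Matrix.mulVec_add, Matrix.mulVec_smul, dotProduct_add, add_dotProduct,
      dotProduct_smul, smul_dotProduct, smul_eq_mul]
    rw [hsym]
    ring
  have h2 : (P.g + ρ • P.gradPhi xb) ⬝ᵥ (xb + t • d)
      = (P.g + ρ • P.gradPhi xb) ⬝ᵥ xb + t * ((P.g + ρ • P.gradPhi xb) ⬝ᵥ d) := by
    simp only [dotProduct_add, dotProduct_smul, smul_eq_mul]
  have h3 : P.gradPsi ρ xb ⬝ᵥ d = xb ⬝ᵥ P.Q.mulVec d + (P.g + ρ • P.gradPhi xb) ⬝ᵥ d := by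
    simp only [LCQPData.gradPsi, add_dotProduct, smul_dotProduct, smul_eq_mul]
    have h4 : P.Q.mulVec xb ⬝ᵥ d = xb ⬝ᵥ P.Q.mulVec d := by
      rw [dotProduct_comm]; exact hsym
    rw [h4]; ring
  simp only [LCQPData.theta]
  rw [h1, h2, h3]; ring

/-- Theorem 4.2, part 2: strict merit function descent at non-stationary points. -/
theorem merit_strict_descent (n nA nc : ℕ) (P : LCQPData n nA nc)
    (hQ : P.Q.PosDef)
    (ρ : ℝ) (hρ : 0 < ρ)
    (xb : Fin n → ℝ) (hxb : xb ∈ P.relFeas)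
    (xstar : Fin n → ℝ)
    (hmin : xstar ∈ P.relFeas ∧
      ∀ z ∈ P.relFeas, z ≠ xstar → P.theta ρ xb xstar < P.theta ρ xb z)
    (hnk : ¬ ∃ ybA ybL ybR, P.PenKKT ρ xb ybA ybL ybR) :
    P.gradPsi ρ xb ⬝ᵥ (xstar - xb) < 0 := by
  classical
  have hQs : P.Qᵀ = P.Q := by have h : P.Q.IsSymm := by simpa using hQ.1
                              exact h
  have hqpos : ∀ d : Fin n → ℝ, d ≠ 0 → 0 < d ⬝ᵥ P.Q.mulVec d := by
    intro d hd
    have := hQ.dotProduct_mulVec_pos hd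
    simpa using this
  by_contra hcon
  push_neg at hcon
  obtain ⟨hxs, hstrict⟩ := hmin
  have hxx : xstar = xb := by
    by_contra hne
    have hd0 : xstar - xb ≠ 0 := sub_ne_zero.mpr hne
    have h1 : P.theta ρ xb xstar < P.theta ρ xb xb := hstrict xb hxb (Ne.symm hne)
    have h2 := mytheta_expand P hQs ρ xb (xstar - xb) 1
    have h3 : xb + (1:ℝ) • (xstar - xb) = xstar := by simp
    rw [h3] at h2
    nlinarith [hqpos _ hd0]
  subst hxx
  set gv := P.gradPsi ρ xstar with hgv
  set rowA : Fin nA → (Fin n → ℝ) := fun i => fun j => P.A i j with hrowA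
  set rowL : Fin nc → (Fin n → ℝ) := fun i => fun j => P.L i j with hrowL
  set rowR : Fin nc → (Fin n → ℝ) := fun i => fun j => P.R i j with hrowR
  set v : (Fin nA ⊕ Fin nA) ⊕ ((Fin nc ⊕ Fin nc) ⊕ (Fin nc ⊕ Fin nc)) → (Fin n → ℝ) :=
    Sum.elim (Sum.elim (fun i => if P.lA i = P.A.mulVec xstar i then rowA i else 0)
                       (fun i => if P.A.mulVec xstar i = P.uA i then -rowA i else 0))
      (Sum.elim (Sum.elim (fun i => if P.lL i = P.L.mulVec xstar i then rowL i else 0)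
                          (fun i => if P.L.mulVec xstar i = P.uL i then -rowL i else 0))
                (Sum.elim (fun i => if P.lR i = P.R.mulVec xstar i then rowR i else 0)
                          (fun i => if P.R.mulVec xstar i = P.uR i then -rowR i else 0))) with hv
  have hrowdA : ∀ (i : Fin nA) (d : Fin n → ℝ), rowA i ⬝ᵥ d = P.A.mulVec d i := fun _ _ => rfl
  have hrowdL : ∀ (i : Fin nc) (d : Fin n → ℝ), rowL i ⬝ᵥ d = P.L.mulVec d i := fun _ _ => rfl
  have hrowdR : ∀ (i : Fin nc) (d : Fin n → ℝ), rowR i ⬝ᵥ d = P.R.mulVec d i := fun _ _ => rfl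
  have H : ∀ d, (∀ idx, 0 ≤ v idx ⬝ᵥ d) → 0 ≤ gv ⬝ᵥ d := by
    intro d hd
    have hAl : ∀ i, P.lA i = P.A.mulVec xstar i → 0 ≤ P.A.mulVec d i := by
      intro i hi
      have := hd (Sum.inl (Sum.inl i))
      rw [hv] at this
      simpa [hi, hrowdA] using this
    have hAu : ∀ i, P.A.mulVec xstar i = P.uA i → P.A.mulVec d i ≤ 0 := by
      intro i hi
      have := hd (Sum.inl (Sum.inr i))
      rw [hv] at this
      simp only [Sum.elim_inl, Sum.elim_inr, if_pos hi, neg_dotProduct, hrowdA] at this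
      linarith
    have hLl : ∀ i, P.lL i = P.L.mulVec xstar i → 0 ≤ P.L.mulVec d i := by
      intro i hi
      have := hd (Sum.inr (Sum.inl (Sum.inl i)))
      rw [hv] at this
      simpa [hi, hrowdL] using this
    have hLu : ∀ i, P.L.mulVec xstar i = P.uL i → P.L.mulVec d i ≤ 0 := by
      intro i hi
      have := hd (Sum.inr (Sum.inl (Sum.inr i)))
      rw [hv] at this
      simp only [Sum.elim_inl, Sum.elim_inr, if_pos hi, neg_dotProduct, hrowdL] at this
      linarith
    have hRl : ∀ i, P.lR i = P.R.mulVec xstar i → 0 ≤ P.R.mulVec d i := by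
      intro i hi
      have := hd (Sum.inr (Sum.inr (Sum.inl i)))
      rw [hv] at this
      simpa [hi, hrowdR] using this
    have hRu : ∀ i, P.R.mulVec xstar i = P.uR i → P.R.mulVec d i ≤ 0 := by
      intro i hi
      have := hd (Sum.inr (Sum.inr (Sum.inr i)))
      rw [hv] at this
      simp only [Sum.elim_inl, Sum.elim_inr, if_pos hi, neg_dotProduct, hrowdR] at this
      linarith
    have hev : ∀ᶠ t in nhdsWithin (0:ℝ) (Set.Ioi 0), xstar + t • d ∈ P.relFeas := by
      have h1 := mymat_event P.A P.lA P.uA xstar d hxb.1 hAl hAu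
      have h2 := mymat_event P.L P.lL P.uL xstar d hxb.2.1 hLl hLu
      have h3 := mymat_event P.R P.lR P.uR xstar d hxb.2.2 hRl hRu
      filter_upwards [h1, h2, h3] with t ht1 ht2 ht3
      exact ⟨ht1, ht2, ht3⟩
    have hval : ∀ᶠ t in nhdsWithin (0:ℝ) (Set.Ioi 0),
        0 ≤ gv ⬝ᵥ d + t/2 * (d ⬝ᵥ P.Q.mulVec d) := by
      filter_upwards [hev, self_mem_nhdsWithin] with t hmem htpos
      have htp : (0:ℝ) < t := htpos
      have hle : P.theta ρ xstar xstar ≤ P.theta ρ xstar (xstar + t • d) := by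
        rcases eq_or_ne (xstar + t • d) xstar with he | hne
        · rw [he]
        · exact (hstrict _ hmem hne).le
      rw [mytheta_expand P hQs ρ xstar d t] at hle
      by_contra hX
      push_neg at hX
      nlinarith
    have tend : Filter.Tendsto (fun t : ℝ => gv ⬝ᵥ d + t/2 * (d ⬝ᵥ P.Q.mulVec d))
        (nhdsWithin (0:ℝ) (Set.Ioi 0)) (nhds (gv ⬝ᵥ d)) := by
      have h : Filter.Tendsto (fun t : ℝ => gv ⬝ᵥ d + t/2 * (d ⬝ᵥ P.Q.mulVec d))
          (nhds 0) (nhds (gv ⬝ᵥ d + 0/2 * (d ⬝ᵥ P.Q.mulVec d))) :=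
        tendsto_const_nhds.add ((Filter.Tendsto.div_const Filter.tendsto_id 2).mul
          tendsto_const_nhds)
      simpa using h.mono_left nhdsWithin_le_nhds
    exact ge_of_tendsto tend hval
  obtain ⟨lam, hlam, hgsum⟩ := myFarkas v gv H (fun k w hw => myFarkas_fin k w gv hw)
  set yA : Fin nA → ℝ := fun i =>
    (if P.lA i = P.A.mulVec xstar i then lam (Sum.inl (Sum.inl i)) else 0)
    - (if P.A.mulVec xstar i = P.uA i then lam (Sum.inl (Sum.inr i)) else 0) with hyA
  set yL : Fin nc → ℝ := fun i =>
    (if P.lL i = P.L.mulVec xstar i then lam (Sum.inr (Sum.inl (Sum.inl i))) else 0)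
    - (if P.L.mulVec xstar i = P.uL i then lam (Sum.inr (Sum.inl (Sum.inr i))) else 0) with hyL
  set yR : Fin nc → ℝ := fun i =>
    (if P.lR i = P.R.mulVec xstar i then lam (Sum.inr (Sum.inr (Sum.inl i))) else 0)
    - (if P.R.mulVec xstar i = P.uR i then lam (Sum.inr (Sum.inr (Sum.inr i))) else 0) with hyR
  have hA : (∑ i, lam (Sum.inl (Sum.inl i)) • v (Sum.inl (Sum.inl i)))
      + (∑ i, lam (Sum.inl (Sum.inr i)) • v (Sum.inl (Sum.inr i))) = P.Aᵀ.mulVec yA := by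
    rw [mytranspose_mulVec_eq_sum, ← Finset.sum_add_distrib]
    refine Finset.sum_congr rfl fun i _ => ?_
    rw [hv, hyA]
    simp only [Sum.elim_inl, Sum.elim_inr]
    by_cases h1 : P.lA i = P.A.mulVec xstar i <;>
      by_cases h2 : P.A.mulVec xstar i = P.uA i
    · simp only [if_pos h1, if_pos h2]; module
    · simp only [if_pos h1, if_neg h2]; module
    · simp only [if_neg h1, if_pos h2]; module
    · simp only [if_neg h1, if_neg h2]; module
  have hL : (∑ i, lam (Sum.inr (Sum.inl (Sum.inl i))) • v (Sum.inr (Sum.inl (Sum.inl i))))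
      + (∑ i, lam (Sum.inr (Sum.inl (Sum.inr i))) • v (Sum.inr (Sum.inl (Sum.inr i))))
      = P.Lᵀ.mulVec yL := by
    rw [mytranspose_mulVec_eq_sum, ← Finset.sum_add_distrib]
    refine Finset.sum_congr rfl fun i _ => ?_
    rw [hv, hyL]
    simp only [Sum.elim_inl, Sum.elim_inr]
    by_cases h1 : P.lL i = P.L.mulVec xstar i <;>
      by_cases h2 : P.L.mulVec xstar i = P.uL i
    · simp only [if_pos h1, if_pos h2]; module
    · simp only [if_pos h1, if_neg h2]; module
    · simp only [if_neg h1, if_pos h2]; module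
    · simp only [if_neg h1, if_neg h2]; module
  have hR : (∑ i, lam (Sum.inr (Sum.inr (Sum.inl i))) • v (Sum.inr (Sum.inr (Sum.inl i))))
      + (∑ i, lam (Sum.inr (Sum.inr (Sum.inr i))) • v (Sum.inr (Sum.inr (Sum.inr i))))
      = P.Rᵀ.mulVec yR := by
    rw [mytranspose_mulVec_eq_sum, ← Finset.sum_add_distrib]
    refine Finset.sum_congr rfl fun i _ => ?_
    rw [hv, hyR]
    simp only [Sum.elim_inl, Sum.elim_inr]
    by_cases h1 : P.lR i = P.R.mulVec xstar i <;>
      by_cases h2 : P.R.mulVec xstar i = P.uR i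
    · simp only [if_pos h1, if_pos h2]; module
    · simp only [if_pos h1, if_neg h2]; module
    · simp only [if_neg h1, if_pos h2]; module
    · simp only [if_neg h1, if_neg h2]; module
  have hstat : P.Q.mulVec xstar + P.g + ρ • P.gradPhi xstar
      = P.Aᵀ.mulVec yA + P.Lᵀ.mulVec yL + P.Rᵀ.mulVec yR := by
    have : gv = P.Aᵀ.mulVec yA + (P.Lᵀ.mulVec yL + P.Rᵀ.mulVec yR) := by
      rw [hgsum]
      simp only [Fintype.sum_sum_type]
      rw [hA, hL, hR]
    rw [hgv, LCQPData.gradPsi] at this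
    rw [this]; abel
  refine hnk ⟨yA, yL, yR, hxb, hstat, ?_, ?_, ?_, ?_, ?_, ?_, ?_, ?_, ?_⟩
  · intro i hi
    obtain ⟨hi1, hi2⟩ := hi
    rw [hyA]
    simp only [if_neg hi1.ne, if_neg hi2.ne, sub_zero]
  · intro i hi
    obtain ⟨hi1, hi2⟩ := hi
    have : yA i = lam (Sum.inl (Sum.inl i)) := by rw [hyA]; simp only [if_pos hi1, if_neg hi2.ne, sub_zero]
    rw [this]; exact hlam _
  · intro i hi
    obtain ⟨hi1, hi2⟩ := hi
    have : yA i = -(lam (Sum.inl (Sum.inr i))) := by rw [hyA]; simp only [if_neg hi1.ne, if_pos hi2, zero_sub]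
    rw [this]; exact neg_nonpos.mpr (hlam _)
  · intro i hi
    obtain ⟨hi1, hi2⟩ := hi
    rw [hyL]
    simp only [if_neg hi1.ne, if_neg hi2.ne, sub_zero]
  · intro i hi
    obtain ⟨hi1, hi2⟩ := hi
    have : yL i = lam (Sum.inr (Sum.inl (Sum.inl i))) := by rw [hyL]; simp only [if_pos hi1, if_neg hi2.ne, sub_zero]
    rw [this]; exact hlam _
  · intro i hi
    obtain ⟨hi1, hi2⟩ := hi
    have : yL i = -(lam (Sum.inr (Sum.inl (Sum.inr i)))) := by rw [hyL]; simp only [if_neg hi1.ne, if_pos hi2, zero_sub]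
    rw [this]; exact neg_nonpos.mpr (hlam _)
  · intro i hi
    obtain ⟨hi1, hi2⟩ := hi
    rw [hyR]
    simp only [if_neg hi1.ne, if_neg hi2.ne, sub_zero]
  · intro i hi
    obtain ⟨hi1, hi2⟩ := hi
    have : yR i = lam (Sum.inr (Sum.inr (Sum.inl i))) := by rw [hyR]; simp only [if_pos hi1, if_neg hi2.ne, sub_zero]
    rw [this]; exact hlam _
  · intro i hi
    obtain ⟨hi1, hi2⟩ := hi
    have : yR i = -(lam (Sum.inr (Sum.inr (Sum.inr i)))) := by rw [hyR]; simp only [if_neg hi1.ne, if_pos hi2, zero_sub]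
    rw [this]; exact neg_nonpos.mpr (hlam _)
end
end

section
/- Remark 1 (positive step length away from stationarity): Let ρ > 0, x̄ ∈ Ω̃, let x* be the unique global minimizer of the convexified inner-loop subproblem min_{x ∈ Ω̃} ϑ_{x̄,ρ}(x), and set p = x* − x̄ and C = LᵀR + RᵀL. Suppose there are no multipliers making x̄ a KKT point of the penalized problem min_{x ∈ Ω̃} ψ_ρ(x), and suppose pᵀCp > 0. Then pᵀ(Q + ρC)p > 0 and the step length α* = −∇ψ_ρ(x̄)ᵀp / (pᵀ(Q + ρC)p) is strictly positive. -/
open Matrix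
open scoped Classical

noncomputable section

variable {n nA nc m : ℕ}

/-- Remark 1: positive step length away from stationarity. -/
theorem positive_step_length (n nA nc : ℕ) (P : LCQPData n nA nc)
    (hQ : P.Q.PosDef)
    (ρ : ℝ) (hρ : 0 < ρ)
    (xb : Fin n → ℝ) (hxb : xb ∈ P.relFeas)
    (xstar : Fin n → ℝ)
    (hmin : xstar ∈ P.relFeas ∧
      ∀ z ∈ P.relFeas, z ≠ xstar → P.theta ρ xb xstar < P.theta ρ xb z)
    (hnk : ¬ ∃ ybA ybL ybR, P.PenKKT ρ xb ybA ybL ybR)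
    (hC : 0 < (xstar - xb) ⬝ᵥ (P.Lᵀ * P.R + P.Rᵀ * P.L).mulVec (xstar - xb)) :
    0 < (xstar - xb) ⬝ᵥ (P.Q + ρ • (P.Lᵀ * P.R + P.Rᵀ * P.L)).mulVec (xstar - xb) ∧
      0 < -(P.gradPsi ρ xb ⬝ᵥ (xstar - xb)) /
        ((xstar - xb) ⬝ᵥ (P.Q + ρ • (P.Lᵀ * P.R + P.Rᵀ * P.L)).mulVec (xstar - xb)) := by
  obtain ⟨hxs, hstrict⟩ := hmin
  set p : Fin n → ℝ := xstar - xb with hp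
  set C : Matrix (Fin n) (Fin n) ℝ := P.Lᵀ * P.R + P.Rᵀ * P.L with hCdef
  have hpne : p ≠ 0 := by
    intro h
    rw [h] at hC
    simp at hC
  have hpQp : 0 < p ⬝ᵥ P.Q.mulVec p := by
    have := hQ.dotProduct_mulVec_pos hpne
    simpa using this
  have hsym : P.Qᵀ = P.Q := hQ.1
  have hcomm : ∀ u v : Fin n → ℝ, u ⬝ᵥ P.Q.mulVec v = P.Q.mulVec u ⬝ᵥ v := by
    intro u v
    rw [Matrix.dotProduct_mulVec, ← Matrix.mulVec_transpose, hsym]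
  have hden : p ⬝ᵥ (P.Q + ρ • C).mulVec p
      = p ⬝ᵥ P.Q.mulVec p + ρ * (p ⬝ᵥ C.mulVec p) := by
    simp [Matrix.add_mulVec, Matrix.smul_mulVec, dotProduct_add,
      dotProduct_smul, smul_eq_mul]
  have hdenpos : 0 < p ⬝ᵥ (P.Q + ρ • C).mulVec p := by
    rw [hden]
    nlinarith [mul_pos hρ hC]
  refine ⟨hdenpos, div_pos ?_ hdenpos⟩
  have hne : xb ≠ xstar := by
    intro h
    apply hpne
    rw [hp, ← h]
    simp
  have hlt : P.theta ρ xb xstar < P.theta ρ xb xb := hstrict xb hxb hne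
  have e1 : P.Q.mulVec xb ⬝ᵥ xstar = xstar ⬝ᵥ P.Q.mulVec xb := dotProduct_comm _ _
  have e2 : P.Q.mulVec xb ⬝ᵥ xb = xb ⬝ᵥ P.Q.mulVec xb := dotProduct_comm _ _
  have e3 : xstar ⬝ᵥ P.Q.mulVec xb = xb ⬝ᵥ P.Q.mulVec xstar := by
    rw [hcomm xstar xb, dotProduct_comm]
  have key : P.gradPsi ρ xb ⬝ᵥ p
      = (P.theta ρ xb xstar - P.theta ρ xb xb) - (1/2) * (p ⬝ᵥ P.Q.mulVec p) := by
    rw [hp]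
    simp only [LCQPData.theta, LCQPData.gradPsi, Matrix.mulVec_sub, dotProduct_sub,
      sub_dotProduct, add_dotProduct, dotProduct_add]
    linarith [e1, e2, e3]
  have hnum : P.gradPsi ρ xb ⬝ᵥ p < 0 := by
    rw [key]; linarith
  linarith
end
end

section
/- Theorem 4.3 (one-step local convergence upon active-set identification): Assume ℓ_L < u_L and ℓ_R < u_R componentwise. Let (x*, y*) be a strongly stationary point of the LCQP and let x̄ ∈ Ω satisfy 𝓛ˡ(x̄) = 𝓛ˡ(x*) and 𝓡ˡ(x̄) = 𝓡ˡ(x*). Then there exists ρ̄ > 0 such that for every ρ ≥ ρ̄: (i) x* is the unique global minimizer of the convexified inner-loop subproblem min_{x ∈ Ω̃} ϑ_{x̄,ρ}(x); (ii) the step p = x* − x̄ satisfies pᵀCp = 0 where C = LᵀR + RᵀL, so the step-length rule (which takes the full step α = 1 when pᵀCp ≤ 0) yields the next iterate x̄ + p = x*; and (iii) there exist multipliers making x* a KKT point of the penalized problem min_{x ∈ Ω̃} ψ_ρ(x). -/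
open Matrix
open scoped Classical

noncomputable section

variable {n nA nc m : ℕ}

private lemma sign_term {l u a z y : ℝ} (h1 : l ≤ a) (h2 : a ≤ u)
    (h3 : l ≤ z) (h4 : z ≤ u)
    (hF : l < a → a < u → y = 0)
    (hLy : l = a → a < u → 0 ≤ y)
    (hUy : l < a → a = u → y ≤ 0) :
    0 ≤ y * (z - a) := by
  rcases eq_or_lt_of_le h1 with hl | hl
  · rcases eq_or_lt_of_le h2 with hu | hu
    · have hz : z = a := le_antisymm (hu ▸ h4) (hl ▸ h3)
      simp [hz]
    · have := hLy hl hu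
      nlinarith
  · rcases eq_or_lt_of_le h2 with hu | hu
    · nlinarith [hUy hl hu]
    · simp [hF hl hu]

private lemma mem_actL_iff {m n : ℕ} (M : Matrix (Fin m) (Fin n) ℝ) (l u : Fin m → ℝ)
    (x : Fin n → ℝ) (i : Fin m) (hbnd : l i < u i) :
    i ∈ actL M l u x ↔ M.mulVec x i = l i := by
  constructor
  · rintro ⟨h1, _⟩
    exact h1.symm
  · intro h
    exact ⟨h.symm, by rw [h]; exact hbnd⟩

private lemma comp_of_phi_zero {n nA nc : ℕ} (P : LCQPData n nA nc) (x : Fin n → ℝ)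
    (hl : ∀ i, P.lL i ≤ P.L.mulVec x i) (hr : ∀ i, P.lR i ≤ P.R.mulVec x i)
    (hphi : P.phi x = 0) (i : Fin nc) :
    P.L.mulVec x i = P.lL i ∨ P.R.mulVec x i = P.lR i := by
  have hsum : ∑ j, (P.L.mulVec x j - P.lL j) * (P.R.mulVec x j - P.lR j) = 0 := by
    simpa [LCQPData.phi, dotProduct, Pi.sub_apply] using hphi
  have hnn : ∀ j ∈ Finset.univ, 0 ≤ (P.L.mulVec x j - P.lL j) * (P.R.mulVec x j - P.lR j) :=
    fun j _ => mul_nonneg (by linarith [hl j]) (by linarith [hr j])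
  have h0 := (Finset.sum_eq_zero_iff_of_nonneg hnn).mp hsum i (Finset.mem_univ i)
  rcases mul_eq_zero.mp h0 with h | h
  · left; linarith [sub_eq_zero.mp h]
  · right; linarith [sub_eq_zero.mp h]

/-- Theorem 4.3: one-step local convergence upon active-set identification. -/
theorem one_step_convergence (n nA nc : ℕ) (P : LCQPData n nA nc)
    (hQ : P.Q.PosDef)
    (hLbnd : ∀ i, P.lL i < P.uL i) (hRbnd : ∀ i, P.lR i < P.uR i)
    (xs : Fin n → ℝ) (yA : Fin nA → ℝ) (yL yR : Fin nc → ℝ)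
    (hss : P.StrongStat xs yA yL yR)
    (xb : Fin n → ℝ) (hxb : xb ∈ P.feas)
    (hL : actL P.L P.lL P.uL xb = actL P.L P.lL P.uL xs)
    (hR : actL P.R P.lR P.uR xb = actL P.R P.lR P.uR xs) :
    ∃ ρbar > (0:ℝ), ∀ ρ ≥ ρbar,
      (xs ∈ P.relFeas ∧
        ∀ z ∈ P.relFeas, z ≠ xs → P.theta ρ xb xs < P.theta ρ xb z) ∧
      ((xs - xb) ⬝ᵥ (P.Lᵀ * P.R + P.Rᵀ * P.L).mulVec (xs - xb) = 0 ∧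
        xb + (xs - xb) = xs) ∧
      (∃ ybA ybL ybR, P.PenKKT ρ xs ybA ybL ybR) := by
  obtain ⟨⟨⟨hxsA, hxsL, hxsR⟩, hxs_phi⟩, hstat, hAf, hAl, hAu, hLf, hWL, hLu, hRf, hWR, hRu⟩ := hss
  obtain ⟨⟨hxbA, hxbL, hxbR⟩, hxb_phi⟩ := hxb
  -- active-set identification, componentwise
  have hLiff : ∀ i, (P.L.mulVec xb i = P.lL i ↔ P.L.mulVec xs i = P.lL i) := by
    intro i
    rw [← mem_actL_iff P.L P.lL P.uL xb i (hLbnd i),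
        ← mem_actL_iff P.L P.lL P.uL xs i (hLbnd i), hL]
  have hRiff : ∀ i, (P.R.mulVec xb i = P.lR i ↔ P.R.mulVec xs i = P.lR i) := by
    intro i
    rw [← mem_actL_iff P.R P.lR P.uR xb i (hRbnd i),
        ← mem_actL_iff P.R P.lR P.uR xs i (hRbnd i), hR]
  have compS : ∀ i, P.L.mulVec xs i = P.lL i ∨ P.R.mulVec xs i = P.lR i :=
    comp_of_phi_zero P xs (fun i => (hxsL i).1) (fun i => (hxsR i).1) hxs_phi
  have compB : ∀ i, P.L.mulVec xb i = P.lL i ∨ P.R.mulVec xb i = P.lR i :=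
    comp_of_phi_zero P xb (fun i => (hxbL i).1) (fun i => (hxbR i).1) hxb_phi
  -- the threshold
  obtain ⟨t, htnn, ht1, ht2, ht3, ht4⟩ :
      ∃ t : Fin nc → ℝ, (∀ i, 0 ≤ t i) ∧
        (∀ i, -(yL i) / (P.R.mulVec xb i - P.lR i) ≤ t i) ∧
        (∀ i, -(yR i) / (P.L.mulVec xb i - P.lL i) ≤ t i) ∧
        (∀ i, -(yL i) / (P.R.mulVec xs i - P.lR i) ≤ t i) ∧
        (∀ i, -(yR i) / (P.L.mulVec xs i - P.lL i) ≤ t i) := by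
    refine ⟨fun i => max 0 (max (max (-(yL i) / (P.R.mulVec xb i - P.lR i))
        (-(yR i) / (P.L.mulVec xb i - P.lL i)))
        (max (-(yL i) / (P.R.mulVec xs i - P.lR i))
        (-(yR i) / (P.L.mulVec xs i - P.lL i)))),
      fun i => le_max_left _ _, fun i => ?_, fun i => ?_, fun i => ?_, fun i => ?_⟩
    · exact le_max_of_le_right (le_max_of_le_left (le_max_left _ _))
    · exact le_max_of_le_right (le_max_of_le_left (le_max_right _ _))
    · exact le_max_of_le_right (le_max_of_le_right (le_max_left _ _))
    · exact le_max_of_le_right (le_max_of_le_right (le_max_right _ _))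
  have hsnn : (0:ℝ) ≤ ∑ i, t i := Finset.sum_nonneg fun i _ => htnn i
  refine ⟨1 + ∑ i, t i, by linarith, ?_⟩
  intro ρ hρ
  have hρpos : (0:ℝ) < ρ := by linarith
  have hρt : ∀ i, t i ≤ ρ := by
    intro i
    have h1 : t i ≤ ∑ j, t j := Finset.single_le_sum (fun j _ => htnn j) (Finset.mem_univ i)
    linarith
  -- coefficient nonnegativity from the threshold
  have hcoefL_b : ∀ i, P.R.mulVec xb i ≠ P.lR i → 0 ≤ yL i + ρ * (P.R.mulVec xb i - P.lR i) := by
    intro i hne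
    have hd : 0 < P.R.mulVec xb i - P.lR i := sub_pos.mpr (lt_of_le_of_ne (hxbR i).1 (Ne.symm hne))
    have h1 := (div_le_iff₀ hd).mp (le_trans (ht1 i) (hρt i))
    linarith
  have hcoefR_b : ∀ i, P.L.mulVec xb i ≠ P.lL i → 0 ≤ yR i + ρ * (P.L.mulVec xb i - P.lL i) := by
    intro i hne
    have hd : 0 < P.L.mulVec xb i - P.lL i := sub_pos.mpr (lt_of_le_of_ne (hxbL i).1 (Ne.symm hne))
    have h1 := (div_le_iff₀ hd).mp (le_trans (ht2 i) (hρt i))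
    linarith
  have hcoefL_s : ∀ i, P.R.mulVec xs i ≠ P.lR i → 0 ≤ yL i + ρ * (P.R.mulVec xs i - P.lR i) := by
    intro i hne
    have hd : 0 < P.R.mulVec xs i - P.lR i := sub_pos.mpr (lt_of_le_of_ne (hxsR i).1 (Ne.symm hne))
    have h1 := (div_le_iff₀ hd).mp (le_trans (ht3 i) (hρt i))
    linarith
  have hcoefR_s : ∀ i, P.L.mulVec xs i ≠ P.lL i → 0 ≤ yR i + ρ * (P.L.mulVec xs i - P.lL i) := by
    intro i hne
    have hd : 0 < P.L.mulVec xs i - P.lL i := sub_pos.mpr (lt_of_le_of_ne (hxsL i).1 (Ne.symm hne))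
    have h1 := (div_le_iff₀ hd).mp (le_trans (ht4 i) (hρt i))
    linarith
  -- generalities about Q
  have hsymmQ : P.Qᵀ = P.Q := by
    have h := hQ.1
    rwa [Matrix.IsHermitian, Matrix.conjTranspose_eq_transpose_of_trivial] at h
  have hQdot : ∀ u v : Fin n → ℝ, u ⬝ᵥ P.Q.mulVec v = v ⬝ᵥ P.Q.mulVec u := by
    intro u v
    rw [Matrix.dotProduct_mulVec]
    have huv : u ᵥ* P.Q = P.Q *ᵥ u := by rw [← Matrix.mulVec_transpose, hsymmQ]
    rw [huv, dotProduct_comm]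
  have hTdot : ∀ {m : ℕ} (M : Matrix (Fin m) (Fin n) ℝ) (c : Fin m → ℝ) (d : Fin n → ℝ),
      Mᵀ.mulVec c ⬝ᵥ d = c ⬝ᵥ M.mulVec d := by
    intro m M c d
    rw [Matrix.mulVec_transpose, ← Matrix.dotProduct_mulVec]
  have hTdot2 : ∀ {m : ℕ} (M : Matrix (Fin m) (Fin n) ℝ) (c : Fin m → ℝ) (d : Fin n → ℝ),
      d ⬝ᵥ Mᵀ.mulVec c = M.mulVec d ⬝ᵥ c := by
    intro m M c d
    rw [Matrix.dotProduct_mulVec, Matrix.vecMul_transpose]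
  -- multipliers for the model problem
  set wL : Fin nc → ℝ := yL + ρ • (P.R.mulVec xb - P.lR) with hwL
  set wR : Fin nc → ℝ := yR + ρ • (P.L.mulVec xb - P.lL) with hwR
  have hwLi : ∀ i, wL i = yL i + ρ * (P.R.mulVec xb i - P.lR i) := by
    intro i; simp [hwL]
  have hwRi : ∀ i, wR i = yR i + ρ * (P.L.mulVec xb i - P.lL i) := by
    intro i; simp [hwR]
  -- gradient of the model at xs points outward
  have hgrad : ∀ z ∈ P.relFeas, 0 ≤ (P.Q.mulVec xs + (P.g + ρ • P.gradPhi xb)) ⬝ᵥ (z - xs) := by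
    intro z hz
    obtain ⟨hzA, hzL, hzR⟩ := hz
    have hvec : P.Q.mulVec xs + (P.g + ρ • P.gradPhi xb)
        = P.Aᵀ.mulVec yA + P.Lᵀ.mulVec wL + P.Rᵀ.mulVec wR := by
      have h0 : P.Q.mulVec xs + (P.g + ρ • P.gradPhi xb)
          = (P.Q.mulVec xs + P.g) + ρ • P.gradPhi xb := by abel
      rw [h0, hstat, hwL, hwR]
      simp only [LCQPData.gradPhi, Matrix.mulVec_add, Matrix.mulVec_smul, smul_add]
      abel
    rw [hvec]
    simp only [add_dotProduct]
    have hA0 : 0 ≤ P.Aᵀ.mulVec yA ⬝ᵥ (z - xs) := by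
      rw [hTdot, Matrix.mulVec_sub]
      simp only [dotProduct, Pi.sub_apply]
      refine Finset.sum_nonneg fun i _ => ?_
      exact sign_term (hxsA i).1 (hxsA i).2 (hzA i).1 (hzA i).2
        (fun h1 h2 => hAf i ⟨h1, h2⟩) (fun h1 h2 => hAl i ⟨h1, h2⟩)
        (fun h1 h2 => hAu i ⟨h1, h2⟩)
    have hL0 : 0 ≤ P.Lᵀ.mulVec wL ⬝ᵥ (z - xs) := by
      rw [hTdot, Matrix.mulVec_sub]
      simp only [dotProduct, Pi.sub_apply]
      refine Finset.sum_nonneg fun i _ => ?_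
      refine sign_term (hxsL i).1 (hxsL i).2 (hzL i).1 (hzL i).2 ?_ ?_ ?_
      · intro h1 h2
        have hy : yL i = 0 := hLf i ⟨h1, h2⟩
        have hRs : P.R.mulVec xs i = P.lR i := (compS i).resolve_left (by linarith)
        have hRb : P.R.mulVec xb i = P.lR i := (hRiff i).mpr hRs
        rw [hwLi i, hy, hRb]
        ring
      · intro h1 h2
        by_cases hc : P.R.mulVec xs i = P.lR i
        · have hy : 0 ≤ yL i := hWL i ⟨⟨h1, h2⟩, ⟨hc.symm, by rw [hc]; exact hRbnd i⟩⟩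
          have hRb : P.R.mulVec xb i = P.lR i := (hRiff i).mpr hc
          rw [hwLi i, hRb]
          simp only [sub_self, mul_zero, add_zero]
          exact hy
        · have hb : P.R.mulVec xb i ≠ P.lR i := fun h => hc ((hRiff i).mp h)
          rw [hwLi i]
          exact hcoefL_b i hb
      · intro h1 h2
        have hy : yL i ≤ 0 := hLu i ⟨h1, h2⟩
        have hRs : P.R.mulVec xs i = P.lR i := (compS i).resolve_left (by linarith)
        have hRb : P.R.mulVec xb i = P.lR i := (hRiff i).mpr hRs
        rw [hwLi i, hRb]
        simp only [sub_self, mul_zero, add_zero]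
        exact hy
    have hR0 : 0 ≤ P.Rᵀ.mulVec wR ⬝ᵥ (z - xs) := by
      rw [hTdot, Matrix.mulVec_sub]
      simp only [dotProduct, Pi.sub_apply]
      refine Finset.sum_nonneg fun i _ => ?_
      refine sign_term (hxsR i).1 (hxsR i).2 (hzR i).1 (hzR i).2 ?_ ?_ ?_
      · intro h1 h2
        have hy : yR i = 0 := hRf i ⟨h1, h2⟩
        have hLs : P.L.mulVec xs i = P.lL i := (compS i).resolve_right (by linarith)
        have hLb : P.L.mulVec xb i = P.lL i := (hLiff i).mpr hLs
        rw [hwRi i, hy, hLb]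
        ring
      · intro h1 h2
        by_cases hc : P.L.mulVec xs i = P.lL i
        · have hy : 0 ≤ yR i := hWR i ⟨⟨hc.symm, by rw [hc]; exact hLbnd i⟩, ⟨h1, h2⟩⟩
          have hLb : P.L.mulVec xb i = P.lL i := (hLiff i).mpr hc
          rw [hwRi i, hLb]
          simp only [sub_self, mul_zero, add_zero]
          exact hy
        · have hb : P.L.mulVec xb i ≠ P.lL i := fun h => hc ((hLiff i).mp h)
          rw [hwRi i]
          exact hcoefR_b i hb
      · intro h1 h2
        have hy : yR i ≤ 0 := hRu i ⟨h1, h2⟩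
        have hLs : P.L.mulVec xs i = P.lL i := (compS i).resolve_right (by linarith)
        have hLb : P.L.mulVec xb i = P.lL i := (hLiff i).mpr hLs
        rw [hwRi i, hLb]
        simp only [sub_self, mul_zero, add_zero]
        exact hy
    linarith
  -- quadratic expansion of the model
  have hθ : ∀ z : Fin n → ℝ, P.theta ρ xb z - P.theta ρ xb xs
      = (P.Q.mulVec xs + (P.g + ρ • P.gradPhi xb)) ⬝ᵥ (z - xs)
        + (1/2) * ((z - xs) ⬝ᵥ P.Q.mulVec (z - xs)) := by
    intro z
    have h1 : (z - xs) ⬝ᵥ P.Q.mulVec (z - xs)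
        = z ⬝ᵥ P.Q.mulVec z - 2 * (xs ⬝ᵥ P.Q.mulVec z) + xs ⬝ᵥ P.Q.mulVec xs := by
      rw [Matrix.mulVec_sub]
      simp only [dotProduct_sub, sub_dotProduct]
      have h := hQdot z xs
      linarith
    have h2 : (P.Q.mulVec xs + (P.g + ρ • P.gradPhi xb)) ⬝ᵥ (z - xs)
        = xs ⬝ᵥ P.Q.mulVec z - xs ⬝ᵥ P.Q.mulVec xs
          + ((P.g + ρ • P.gradPhi xb) ⬝ᵥ z - (P.g + ρ • P.gradPhi xb) ⬝ᵥ xs) := by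
      simp only [add_dotProduct, dotProduct_sub]
      have hc1 : P.Q.mulVec xs ⬝ᵥ z = xs ⬝ᵥ P.Q.mulVec z := by
        rw [dotProduct_comm]
        exact hQdot z xs
      have hc2 : P.Q.mulVec xs ⬝ᵥ xs = xs ⬝ᵥ P.Q.mulVec xs := dotProduct_comm _ _
      linarith
    rw [h1, h2]
    simp only [LCQPData.theta]
    ring
  -- part (i)
  have part1 : xs ∈ P.relFeas ∧
      ∀ z ∈ P.relFeas, z ≠ xs → P.theta ρ xb xs < P.theta ρ xb z := by
    refine ⟨⟨hxsA, hxsL, hxsR⟩, ?_⟩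
    intro z hz hne
    have hd : z - xs ≠ 0 := sub_ne_zero.mpr hne
    have hpos2 : 0 < (z - xs) ⬝ᵥ P.Q.mulVec (z - xs) := by
      have h := hQ.dotProduct_mulVec_pos hd
      simpa using h
    have hg := hgrad z hz
    have hid := hθ z
    linarith
  -- part (ii)
  have part2 : (xs - xb) ⬝ᵥ (P.Lᵀ * P.R + P.Rᵀ * P.L).mulVec (xs - xb) = 0 ∧
      xb + (xs - xb) = xs := by
    constructor
    · have hz : ∀ i, (P.L.mulVec (xs - xb) i) * (P.R.mulVec (xs - xb) i) = 0 := by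
        intro i
        rcases compB i with h | h
        · have hs := (hLiff i).mp h
          have h0 : P.L.mulVec (xs - xb) i = 0 := by
            rw [Matrix.mulVec_sub, Pi.sub_apply, h, hs, sub_self]
          rw [h0, zero_mul]
        · have hs := (hRiff i).mp h
          have h0 : P.R.mulVec (xs - xb) i = 0 := by
            rw [Matrix.mulVec_sub, Pi.sub_apply, h, hs, sub_self]
          rw [h0, mul_zero]
      have e1 : (P.L.mulVec (xs - xb)) ⬝ᵥ (P.R.mulVec (xs - xb)) = 0 := by
        simp only [dotProduct]
        exact Finset.sum_eq_zero fun i _ => hz i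
      have e2 : (P.R.mulVec (xs - xb)) ⬝ᵥ (P.L.mulVec (xs - xb)) = 0 := by
        rw [dotProduct_comm]
        exact e1
      rw [Matrix.add_mulVec, dotProduct_add, ← Matrix.mulVec_mulVec,
        ← Matrix.mulVec_mulVec, hTdot2, hTdot2, e1, e2, add_zero]
    · abel
  refine ⟨part1, part2, yA, yL + ρ • (P.R.mulVec xs - P.lR), yR + ρ • (P.L.mulVec xs - P.lL),
    ⟨hxsA, hxsL, hxsR⟩, ?_, hAf, hAl, hAu, ?_, ?_, ?_, ?_, ?_, ?_⟩
  · have h0 : P.Q.mulVec xs + P.g + ρ • P.gradPhi xs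
        = (P.Aᵀ.mulVec yA + P.Lᵀ.mulVec yL + P.Rᵀ.mulVec yR) + ρ • P.gradPhi xs := by
      rw [hstat]
    rw [h0]
    simp only [LCQPData.gradPhi, Matrix.mulVec_add, Matrix.mulVec_smul, smul_add]
    abel
  · rintro i ⟨h1, h2⟩
    have hy : yL i = 0 := hLf i ⟨h1, h2⟩
    have hRs : P.R.mulVec xs i = P.lR i := (compS i).resolve_left (by linarith)
    simp [hy, hRs]
  · rintro i ⟨h1, h2⟩
    by_cases hc : P.R.mulVec xs i = P.lR i
    · have hy : 0 ≤ yL i := hWL i ⟨⟨h1, h2⟩, ⟨hc.symm, by rw [hc]; exact hRbnd i⟩⟩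
      simp only [Pi.add_apply, Pi.smul_apply, Pi.sub_apply, smul_eq_mul, hc, sub_self,
        mul_zero, add_zero]
      exact hy
    · have h := hcoefL_s i hc
      simpa [smul_eq_mul] using h
  · rintro i ⟨h1, h2⟩
    have hy : yL i ≤ 0 := hLu i ⟨h1, h2⟩
    have hRs : P.R.mulVec xs i = P.lR i := (compS i).resolve_left (by linarith)
    simp only [Pi.add_apply, Pi.smul_apply, Pi.sub_apply, smul_eq_mul, hRs, sub_self,
      mul_zero, add_zero]
    exact hy
  · rintro i ⟨h1, h2⟩
    have hy : yR i = 0 := hRf i ⟨h1, h2⟩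
    have hLs : P.L.mulVec xs i = P.lL i := (compS i).resolve_right (by linarith)
    simp [hy, hLs]
  · rintro i ⟨h1, h2⟩
    by_cases hc : P.L.mulVec xs i = P.lL i
    · have hy : 0 ≤ yR i := hWR i ⟨⟨hc.symm, by rw [hc]; exact hLbnd i⟩, ⟨h1, h2⟩⟩
      simp only [Pi.add_apply, Pi.smul_apply, Pi.sub_apply, smul_eq_mul, hc, sub_self,
        mul_zero, add_zero]
      exact hy
    · have h := hcoefR_s i hc
      simpa [smul_eq_mul] using h
  · rintro i ⟨h1, h2⟩
    have hy : yR i ≤ 0 := hRu i ⟨h1, h2⟩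
    have hLs : P.L.mulVec xs i = P.lL i := (compS i).resolve_right (by linarith)
    simp only [Pi.add_apply, Pi.smul_apply, Pi.sub_apply, smul_eq_mul, hLs, sub_self,
      mul_zero, add_zero]
    exact hy
end
end

section
/- Zero penalty along the segment (proof of Theorem 4.3): Assume ℓ_L < u_L and ℓ_R < u_R componentwise. Let x̄, x* ∈ Ω (in particular φ(x̄) = φ(x*) = 0) with 𝓛ˡ(x̄) = 𝓛ˡ(x*) and 𝓡ˡ(x̄) = 𝓡ˡ(x*), and set p = x* − x̄. Then φ(x̄ + αp) = 0 for every α ∈ [0,1], and consequently pᵀCp = 0, where C = LᵀR + RᵀL. -/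
open Matrix
open scoped Classical

noncomputable section

variable {n nA nc m : ℕ}

section DotProduct

variable {ι R : Type*} [Fintype ι]

theorem dotProduct_eq_zero_of_forall_eq_zero_or_eq_zero [NonUnitalNonAssocSemiring R]
    {u v : ι → R} (h : ∀ i, u i = 0 ∨ v i = 0) : u ⬝ᵥ v = 0 :=
  Finset.sum_eq_zero fun i _ =>
    (h i).elim (mul_eq_zero_of_left · _) (mul_eq_zero_of_right _ ·)

theorem eq_zero_or_eq_zero_of_dotProduct_eq_zero [Semiring R] [PartialOrder R]
    [IsOrderedRing R] [NoZeroDivisors R] {u v : ι → R} (hu : 0 ≤ u) (hv : 0 ≤ v)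
    (h : u ⬝ᵥ v = 0) (i : ι) : u i = 0 ∨ v i = 0 :=
  mul_eq_zero.1 <| (Finset.sum_eq_zero_iff_of_nonneg fun j _ => mul_nonneg (hu j) (hv j)).1 h i
    (Finset.mem_univ i)

theorem dotProduct_transpose_mul_add_mulVec [CommSemiring R] {κ : Type*} [Fintype κ]
    (A B : Matrix ι κ R) (p : κ → R) :
    p ⬝ᵥ (Aᵀ * B + Bᵀ * A) *ᵥ p = 2 * ((A *ᵥ p) ⬝ᵥ (B *ᵥ p)) := by
  rw [add_mulVec, ← mulVec_mulVec, ← mulVec_mulVec, dotProduct_add,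
    dotProduct_mulVec p Aᵀ, dotProduct_mulVec p Bᵀ, vecMul_transpose,
    vecMul_transpose, dotProduct_comm (B *ᵥ p), two_mul]

end DotProduct

section Segment

variable {ι κ R : Type*} [Fintype κ] [CommRing R] {M : Matrix ι κ R} {x y : κ → R} {i : ι}
  {c : R}

theorem mulVec_sub_apply_eq_zero (hx : (M *ᵥ x) i = c) (hy : (M *ᵥ y) i = c) :
    (M *ᵥ (y - x)) i = 0 := by
  rw [mulVec_sub, Pi.sub_apply, hx, hy, sub_self]

theorem mulVec_add_smul_sub_apply_eq (hx : (M *ᵥ x) i = c) (hy : (M *ᵥ y) i = c) (α : R) :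
    (M *ᵥ (x + α • (y - x))) i = c := by
  rw [mulVec_add, mulVec_smul, Pi.add_apply, Pi.smul_apply, mulVec_sub_apply_eq_zero hx hy,
    smul_zero, add_zero, hx]

end Segment

theorem mulVec_apply_eq_of_actL_eq {M : Matrix (Fin m) (Fin n) ℝ} {l u : Fin m → ℝ}
    {x y : Fin n → ℝ} (h : actL M l u x = actL M l u y) {i : Fin m} (hlu : l i < u i)
    (hx : (M *ᵥ x) i = l i) : (M *ᵥ y) i = l i :=
  (h ▸ (⟨hx.symm, hx ▸ hlu⟩ : i ∈ actL M l u x) : i ∈ actL M l u y).1.symm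

/-- `φ(x̄) = 0` is a sum of nonnegative products, so each pair sits at a lower bound on one side
at `x̄`; as `ℓ < u`, that bound is lower-active, and equal active sets carry it over to `x*`. -/
theorem LCQPData.lower_bound_shared_of_actL_eq (P : LCQPData n nA nc)
    (hLbnd : ∀ i, P.lL i < P.uL i) (hRbnd : ∀ i, P.lR i < P.uR i) {xb xs : Fin n → ℝ}
    (hxb : xb ∈ P.feas) (hL : actL P.L P.lL P.uL xb = actL P.L P.lL P.uL xs)
    (hR : actL P.R P.lR P.uR xb = actL P.R P.lR P.uR xs) (i : Fin nc) :
    ((P.L *ᵥ xb) i = P.lL i ∧ (P.L *ᵥ xs) i = P.lL i) ∨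
      ((P.R *ᵥ xb) i = P.lR i ∧ (P.R *ᵥ xs) i = P.lR i) := by
  obtain ⟨⟨-, hbL, hbR⟩, hbφ⟩ := hxb
  have hcompl := eq_zero_or_eq_zero_of_dotProduct_eq_zero
    (fun j => sub_nonneg.2 (hbL j).1) (fun j => sub_nonneg.2 (hbR j).1) hbφ i
  refine hcompl.imp (fun h => ?_) (fun h => ?_)
  · have hb := sub_eq_zero.1 h
    exact ⟨hb, mulVec_apply_eq_of_actL_eq hL (hLbnd i) hb⟩
  · have hb := sub_eq_zero.1 h
    exact ⟨hb, mulVec_apply_eq_of_actL_eq hR (hRbnd i) hb⟩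

theorem zero_penalty_on_segment_general (n nA nc : ℕ) (P : LCQPData n nA nc)
    (hLbnd : ∀ i, P.lL i < P.uL i) (hRbnd : ∀ i, P.lR i < P.uR i)
    (xb xs : Fin n → ℝ) (hxb : xb ∈ P.feas)
    (hL : actL P.L P.lL P.uL xb = actL P.L P.lL P.uL xs)
    (hR : actL P.R P.lR P.uR xb = actL P.R P.lR P.uR xs) :
    (∀ α ∈ Set.Icc (0:ℝ) 1, P.phi (xb + α • (xs - xb)) = 0) ∧
      (xs - xb) ⬝ᵥ (P.Lᵀ * P.R + P.Rᵀ * P.L).mulVec (xs - xb) = 0 := by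
  have hshared := P.lower_bound_shared_of_actL_eq hLbnd hRbnd hxb hL hR
  refine ⟨fun α _ => dotProduct_eq_zero_of_forall_eq_zero_or_eq_zero fun i => ?_, ?_⟩
  · refine (hshared i).imp (fun ⟨hb, hs⟩ => ?_) (fun ⟨hb, hs⟩ => ?_) <;>
      rw [Pi.sub_apply, mulVec_add_smul_sub_apply_eq hb hs, sub_self]
  · rw [dotProduct_transpose_mul_add_mulVec, dotProduct_eq_zero_of_forall_eq_zero_or_eq_zero
      fun i => (hshared i).imp (fun ⟨hb, hs⟩ => mulVec_sub_apply_eq_zero hb hs)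
        (fun ⟨hb, hs⟩ => mulVec_sub_apply_eq_zero hb hs), mul_zero]

/-- Zero penalty along the segment (proof of Theorem 4.3). -/
theorem zero_penalty_on_segment (n nA nc : ℕ) (P : LCQPData n nA nc)
    (hLbnd : ∀ i, P.lL i < P.uL i) (hRbnd : ∀ i, P.lR i < P.uR i)
    (xb xs : Fin n → ℝ) (hxb : xb ∈ P.feas) (hxs : xs ∈ P.feas)
    (hL : actL P.L P.lL P.uL xb = actL P.L P.lL P.uL xs)
    (hR : actL P.R P.lR P.uR xb = actL P.R P.lR P.uR xs) :
    (∀ α ∈ Set.Icc (0:ℝ) 1, P.phi (xb + α • (xs - xb)) = 0) ∧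
      (xs - xb) ⬝ᵥ (P.Lᵀ * P.R + P.Rᵀ * P.L).mulVec (xs - xb) = 0 :=
  zero_penalty_on_segment_general n nA nc P hLbnd hRbnd xb xs hxb hL hR
end
end

section
/- Correctness of the MIQP reformulation of the complementarity constraints: Assume ℓ_L ≤ u_L and ℓ_R ≤ u_R componentwise. For x ∈ ℝⁿ, the following are equivalent: (i) ℓ_L ≤ Lx ≤ u_L, ℓ_R ≤ Rx ≤ u_R componentwise and (Lx − ℓ_L)ᵀ(Rx − ℓ_R) = 0; (ii) there exist z^L, z^R ∈ {0,1}^{n_c} such that for every i ∈ {1,…,n_c}: z^L_i + z^R_i ≤ 1, ℓ_{L_i} ≤ L_i x, ℓ_{R_i} ≤ R_i x, L_i x ≤ u_{L_i} z^L_i + (1 − z^L_i)ℓ_{L_i}, and R_i x ≤ u_{R_i} z^R_i + (1 − z^R_i)ℓ_{R_i}. -/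
open Matrix

/-! A product of two nonnegative slacks vanishes exactly when one of them does, and a binary
variable `z` selects which one: the bound `a ≤ u z + (1 - z) l` reads `a ≤ l` at `z = 0` and
`a ≤ u` at `z = 1`, so `zL i + zR i ≤ 1` forces at least one slack to be pinned to zero. The
orthogonality constraint is a sum of such nonnegative products, hence equivalent to all of them
vanishing. -/

theorem Matrix.dotProduct_eq_zero_iff_of_nonneg {ι R : Type*} [Fintype ι] [Semiring R]
    [PartialOrder R] [IsOrderedRing R] {v w : ι → R} (hv : 0 ≤ v) (hw : 0 ≤ w) :
    v ⬝ᵥ w = 0 ↔ ∀ i, v i * w i = 0 := by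
  simpa [dotProduct] using
    Finset.sum_eq_zero_iff_of_nonneg (s := Finset.univ) fun i _ => mul_nonneg (hv i) (hw i)

section BinarySelection

variable {K : Type*} [Field K] [LinearOrder K] [IsStrictOrderedRing K]

theorem le_of_le_binary_interpolation {a l u z : K} (hlu : l ≤ u) (hz : z = 0 ∨ z = 1)
    (h : a ≤ u * z + (1 - z) * l) : a ≤ u := by
  rcases hz with rfl | rfl <;> linarith

theorem complementarity_iff_exists_binary {a b la ua lb ub : K} (ha : la ≤ ua) (hb : lb ≤ ub) :
    ((la ≤ a ∧ a ≤ ua) ∧ (lb ≤ b ∧ b ≤ ub) ∧ (a - la) * (b - lb) = 0) ↔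
      ∃ za zb : K, (za = 0 ∨ za = 1) ∧ (zb = 0 ∨ zb = 1) ∧ za + zb ≤ 1 ∧ la ≤ a ∧ lb ≤ b ∧
        a ≤ ua * za + (1 - za) * la ∧ b ≤ ub * zb + (1 - zb) * lb := by
  constructor
  · rintro ⟨⟨hla, hau⟩, ⟨hlb, hbu⟩, hab⟩
    rcases mul_eq_zero.1 hab with hsa | hsb
    · exact ⟨0, 1, .inl rfl, .inr rfl, by norm_num, hla, hlb, by linarith, by linarith⟩
    · exact ⟨1, 0, .inr rfl, .inl rfl, by norm_num, hla, hlb, by linarith, by linarith⟩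
  · rintro ⟨za, zb, hza, hzb, hsum, hla, hlb, hau, hbu⟩
    refine ⟨⟨hla, le_of_le_binary_interpolation ha hza hau⟩,
      ⟨hlb, le_of_le_binary_interpolation hb hzb hbu⟩, ?_⟩
    have hzero : za = 0 ∨ zb = 0 := by
      rcases hza with rfl | rfl
      · exact .inl rfl
      rcases hzb with rfl | rfl
      · exact .inr rfl
      norm_num at hsum
    rcases hzero with rfl | rfl
    · exact mul_eq_zero_of_left (by linarith) _
    · exact mul_eq_zero_of_right _ (by linarith)

end BinarySelection

/-- Correctness of the MIQP reformulation of the complementarity constraints. -/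
theorem miqp_reformulation_correct (n nc : ℕ)
    (L R : Matrix (Fin nc) (Fin n) ℝ) (lL uL lR uR : Fin nc → ℝ)
    (hLbnd : ∀ i, lL i ≤ uL i) (hRbnd : ∀ i, lR i ≤ uR i)
    (x : Fin n → ℝ) :
    ((∀ i, lL i ≤ L.mulVec x i ∧ L.mulVec x i ≤ uL i) ∧
      (∀ i, lR i ≤ R.mulVec x i ∧ R.mulVec x i ≤ uR i) ∧
      (L.mulVec x - lL) ⬝ᵥ (R.mulVec x - lR) = 0) ↔
    (∃ zL zR : Fin nc → ℝ,
      (∀ i, zL i = 0 ∨ zL i = 1) ∧ (∀ i, zR i = 0 ∨ zR i = 1) ∧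
      ∀ i, zL i + zR i ≤ 1 ∧
        lL i ≤ L.mulVec x i ∧ lR i ≤ R.mulVec x i ∧
        L.mulVec x i ≤ uL i * zL i + (1 - zL i) * lL i ∧
        R.mulVec x i ≤ uR i * zR i + (1 - zR i) * lR i) := by
  have hcompl := fun i =>
    complementarity_iff_exists_binary (a := (L *ᵥ x) i) (b := (R *ᵥ x) i) (hLbnd i) (hRbnd i)
  constructor
  · rintro ⟨hL, hR, hdot⟩
    have hprod := (dotProduct_eq_zero_iff_of_nonneg (fun i => sub_nonneg.2 (hL i).1)
      (fun i => sub_nonneg.2 (hR i).1)).1 hdot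
    choose zL zR hz using fun i => (hcompl i).1 ⟨hL i, hR i, hprod i⟩
    exact ⟨zL, zR, fun i => (hz i).1, fun i => (hz i).2.1, fun i => (hz i).2.2⟩
  · rintro ⟨zL, zR, hzL, hzR, h⟩
    have hi := fun i => (hcompl i).2 ⟨zL i, zR i, hzL i, hzR i, h i⟩
    refine ⟨fun i => (hi i).1, fun i => (hi i).2.1, (dotProduct_eq_zero_iff_of_nonneg (fun i => sub_nonneg.2 (hi i).1.1)
      (fun i => sub_nonneg.2 (hi i).2.1.1)).2 fun i => (hi i).2.2⟩
end
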